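/- arXiv:2206.04892 — 7 statements merged into one kernel-verified Lean document; each statement's English description precedes it below -/
import Mathlib

section
/- Let m ≥ 4 be an integer and let f₁, f₂ : ℝ → ℝ be smooth even functions with fᵢ(r) > 0 for all r, f₁(0) = f₂(0) = 1, and assume moreover that f₁ and f₂ are real analytic on a neighborhood of 0. Then there exist δ > 0 and a function η : ℝ → ℝ which is real analytic on (−δ, δ), odd, satisfies η'(0) = 1 and η(r) > 0 for 0 < r < δ, and such that f₁(η(r)) · η(r)^(m−1) = r^(m−1) · η'(r)^(m−1) · f₂(r) for all r with 0 < r < δ. -/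
open scoped Topology

theorem analyticAt_rlog {x : ℝ} (hx : 0 < x) : AnalyticAt ℝ Real.log x := by
  have h2 : AnalyticAt ℝ (fun y : ℝ => Complex.log (y : ℂ)) x := by
    apply AnalyticAt.comp (g := Complex.log)
    · exact (analyticAt_clog (by simp [Complex.slitPlane, hx])).restrictScalars
    · exact Complex.ofRealCLM.analyticAt _
  have h1 : AnalyticAt ℝ (fun y : ℝ => (Complex.log (y : ℂ)).re) x :=
    (Complex.reCLM.analyticAt _).comp h2
  apply h1.congr
  filter_upwards [eventually_gt_nhds hx] with y hy
  rw [← Complex.ofReal_log hy.le]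
  simp

theorem exists_primitive_analytic {c : ℝ → ℝ} (hc : AnalyticAt ℝ c 0) :
    ∃ S : ℝ → ℝ, AnalyticAt ℝ S 0 ∧ S 0 = 0 ∧ ∀ᶠ y in 𝓝 (0:ℝ), HasDerivAt S (c y) y := by
  obtain ⟨p, r, hpr⟩ := hc
  set a : ℕ → ℝ := p.coeff with ha
  set d : ℕ → ℝ := fun n => if n = 0 then 0 else a (n-1) / n with hd
  set q := FormalMultilinearSeries.ofScalars ℝ d with hqdef
  have hda : ∀ n : ℕ, |d (n+1)| ≤ ‖p n‖ := by
    intro n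
    have h1 : |a n| ≤ ‖p n‖ := by
      have h := (p n).le_opNorm (fun _ => (1:ℝ))
      simp only [norm_one, Finset.prod_const_one, mul_one] at h
      have he : a n = p n fun _ => (1:ℝ) := rfl
      rw [he, ← Real.norm_eq_abs]
      exact h
    have h2 : |d (n+1)| = |a n| / (n+1) := by
      have : ((n:ℝ)+1) > 0 := by positivity
      simp only [hd, Nat.add_sub_cancel, if_neg (Nat.succ_ne_zero n), Nat.cast_add, Nat.cast_one]
      rw [abs_div, abs_of_pos this]
    rw [h2]
    calc |a n| / (n+1) ≤ |a n| := by
          apply div_le_self (abs_nonneg _); linarith [Nat.cast_nonneg (α := ℝ) n]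
      _ ≤ ‖p n‖ := h1
  -- radius positivity
  obtain ⟨ρ, hρ0, hρr⟩ : ∃ ρ : NNReal, 0 < ρ ∧ (ρ : ENNReal) < r := by
    rcases ENNReal.lt_iff_exists_nnreal_btwn.1 hpr.r_pos with ⟨ρ, h0, hr⟩
    exact ⟨ρ, by simpa using h0, hr⟩
  obtain ⟨C, hC0, hC⟩ := p.norm_mul_pow_le_of_lt_radius (lt_of_lt_of_le hρr hpr.r_le)
  have hqrad : (ρ : ENNReal) ≤ q.radius := by
    refine q.le_radius_of_bound (C * ↑ρ) fun n => ?_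
    have hnorm : ‖q n‖ = |d n| := by
      rw [hqdef, FormalMultilinearSeries.ofScalars_norm, Real.norm_eq_abs]
    rcases n with _ | k
    · simp only [hnorm, hd]; simp; positivity
    · rw [hnorm]
      calc |d (k+1)| * (ρ:ℝ) ^ (k+1) ≤ ‖p k‖ * (ρ:ℝ)^(k+1) := by
            apply mul_le_mul_of_nonneg_right (hda k) (by positivity)
        _ = (‖p k‖ * (ρ:ℝ)^k) * ρ := by ring
        _ ≤ C * ρ := by apply mul_le_mul_of_nonneg_right (hC k) ρ.2
  have hq0 : 0 < q.radius := lt_of_lt_of_le (by exact_mod_cast hρ0) hqrad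
  set S := q.sum with hS
  have hSball : HasFPowerSeriesOnBall S q 0 q.radius := q.hasFPowerSeriesOnBall hq0
  refine ⟨S, hSball.analyticAt, ?_, ?_⟩
  · have : ∀ n, (q n fun _ => (0:ℝ)) = 0 := by
      intro n
      rw [hqdef, FormalMultilinearSeries.ofScalars_apply_eq]
      rcases n with _ | k
      · simp [hd]
      · simp
    simp only [hS, FormalMultilinearSeries.sum]
    rw [tsum_congr this]
    exact tsum_zero
  · have hD := hSball.fderiv
    filter_upwards [EMetric.ball_mem_nhds (0:ℝ) (lt_min hpr.r_pos hq0)] with y hy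
    rw [EMetric.mem_ball, lt_min_iff] at hy
    have hy1 : y ∈ Metric.eball (0:ℝ) r := by simpa [Metric.mem_eball] using hy.1
    have hy2 : y ∈ Metric.eball (0:ℝ) q.radius := by simpa [Metric.mem_eball] using hy.2
    have hdiff : DifferentiableAt ℝ S y := (hSball.analyticAt_of_mem (by simpa using hy2)).differentiableAt
    suffices hder : deriv S y = c y by
      have := hdiff.hasDerivAt; rwa [hder] at this
    rcases eq_or_ne y 0 with rfl | hy0
    · have h1 : deriv S 0 = q 1 fun _ => 1 := hSball.hasFPowerSeriesAt.deriv
      have h2 : (q 1 fun _ => (1:ℝ)) = a 0 := by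
        rw [hqdef, FormalMultilinearSeries.ofScalars_apply_eq]
        simp [hd]
      have h3 : c 0 = a 0 := by
        have h := hpr.hasFPowerSeriesAt.coeff_zero (fun _ => (1:ℝ))
        have he : a 0 = p 0 fun _ => (1:ℝ) := rfl
        rw [he, h]
      rw [h1, h2, h3]
    · -- y ≠ 0
      have hsum1 : HasSum (fun n => (q.derivSeries n fun _ => y) y) (fderiv ℝ S y y) := by
        have h := hD.hasSum (by simpa [Metric.mem_eball] using hy2)
        simpa using (ContinuousLinearMap.apply ℝ ℝ y).hasSum h
      have hterm : ∀ n : ℕ, (q.derivSeries n fun _ => y) y = (a n * y^n) * y := by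
        intro n
        rw [FormalMultilinearSeries.derivSeries_apply_diag]
        rw [hqdef, FormalMultilinearSeries.ofScalars_apply_eq]
        have hne : ((n:ℝ)+1) ≠ 0 := by positivity
        simp only [hd, Nat.add_sub_cancel, if_neg (Nat.succ_ne_zero n), nsmul_eq_mul, smul_eq_mul,
          Nat.cast_add, Nat.cast_one]
        field_simp
        ring
      have hsum1' : HasSum (fun n => (a n * y^n) * y) (fderiv ℝ S y y) := by
        rwa [funext hterm] at hsum1
      have hsum2 : HasSum (fun n => (a n * y^n) * y) (c y * y) := by
        have h := hpr.hasSum hy1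
        have h2 : HasSum (fun n => y ^ n • a n) (c y) := by
          simpa [FormalMultilinearSeries.apply_eq_pow_smul_coeff] using h
        have := h2.mul_right y
        simpa [smul_eq_mul, mul_comm, mul_assoc, mul_left_comm] using this
      have hfd : fderiv ℝ S y y = c y * y := hsum1'.unique hsum2
      have hfd2 : fderiv ℝ S y y = deriv S y * y := by
        have : fderiv ℝ S y y = fderiv ℝ S y (y • 1) := by norm_num
        rw [this, (fderiv ℝ S y).map_smul, smul_eq_mul, mul_comm]
        rfl
      rw [← mul_right_cancel₀ hy0 (hfd2.symm.trans hfd)]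

theorem analyticAt_div_id {h : ℝ → ℝ} (hh : AnalyticAt ℝ h 0) (h0 : h 0 = 0)
    (h1 : deriv h 0 = 0) : AnalyticAt ℝ (fun t => h t / t) 0 := by
  by_cases htop : analyticOrderAt h 0 = ⊤
  · have hz : ∀ᶠ t in 𝓝 (0:ℝ), h t = 0 := analyticOrderAt_eq_top.mp htop
    apply (analyticAt_const (v := (0:ℝ))).congr
    filter_upwards [hz] with t ht
    simp [ht]
  · obtain ⟨g, hg, hg0, hfg⟩ := (hh.analyticOrderAt_eq_natCast (n := (analyticOrderAt h 0).toNat)).mp (ENat.coe_toNat htop).symm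
    simp only [sub_zero, smul_eq_mul] at hfg
    rcases hn : (analyticOrderAt h 0).toNat with _ | n
    · exfalso
      rw [hn] at hfg
      have := hfg.self_of_nhds
      simp [h0] at this
      exact hg0 this.symm
    rcases n with _ | k
    · -- order 1 : contradiction with deriv = 0
      exfalso
      rw [hn] at hfg
      have hD : HasDerivAt (fun t : ℝ => t ^ 1 * g t) (g 0) 0 := by
        have := (hasDerivAt_pow 1 (0:ℝ)).fun_mul hg.differentiableAt.hasDerivAt
        simpa using this
      have : deriv h 0 = g 0 := by
        rw [Filter.EventuallyEq.deriv_eq hfg]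
        exact hD.deriv
      rw [h1] at this
      exact hg0 this.symm
    · -- order k+2
      rw [hn] at hfg
      have han : AnalyticAt ℝ (fun t : ℝ => t ^ (k+1) * g t) 0 :=
        ((analyticAt_id : AnalyticAt ℝ _root_.id (0:ℝ)).pow (k+1)).mul hg
      apply han.congr
      filter_upwards [hfg] with t ht
      rcases eq_or_ne t 0 with rfl | ht0
      · simp [h0]
      · rw [ht]
        field_simp
        ring

theorem aux_phi (k : ℕ) (hk : k ≠ 0) (f : ℝ → ℝ)
    (hf : ContDiff ℝ (⊤ : ℕ∞) f) (heven : ∀ r : ℝ, f (-r) = f r) (hpos : ∀ r : ℝ, 0 < f r)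
    (hf0 : f 0 = 1) (hfan : AnalyticAt ℝ f 0) :
    ∃ (φ aa Fk : ℝ → ℝ),
      AnalyticAt ℝ φ 0 ∧ (∀ y, φ y = y * aa y) ∧ (∀ y, 0 < aa y) ∧ aa 0 = 1 ∧
      (∀ y, f y * (Fk y) ^ k = 1) ∧ (∀ y, 0 < Fk y) ∧ Fk 0 = 1 ∧
      (∀ᶠ y in 𝓝 (0:ℝ), aa (-y) = aa y) ∧
      (∀ᶠ y in 𝓝 (0:ℝ), HasDerivAt φ (aa y * Fk y) y) := by
  have hkR : (k:ℝ) ≠ 0 := Nat.cast_ne_zero.mpr hk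
  set Fk : ℝ → ℝ := fun y => Real.exp (-(1/k) * Real.log (f y)) with hFkdef
  have hFkpos : ∀ y, 0 < Fk y := fun y => Real.exp_pos _
  have hFk0 : Fk 0 = 1 := by simp [hFkdef, hf0]
  have hFkpow : ∀ y, f y * (Fk y) ^ k = 1 := by
    intro y
    rw [hFkdef]
    rw [← Real.exp_nat_mul]
    have : (k:ℝ) * (-(1/k) * Real.log (f y)) = -Real.log (f y) := by
      field_simp
    rw [this, Real.exp_neg, Real.exp_log (hpos y)]
    exact mul_inv_cancel₀ (hpos y).ne'
  have hFkeven : ∀ y, Fk (-y) = Fk y := by intro y; simp [hFkdef, heven y]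
  -- derivative of f at 0 is 0
  have hdf : DifferentiableAt ℝ f 0 := (hf.differentiable (by simp)).differentiableAt
  have hfderiv0 : HasDerivAt f 0 0 := by
    have h1 : HasDerivAt f (deriv f 0) 0 := hdf.hasDerivAt
    have h2 : HasDerivAt (fun r : ℝ => f (-r)) (deriv f 0 * (-1)) 0 := by
      have h1' : HasDerivAt f (deriv f 0) (-(0:ℝ)) := by rwa [neg_zero]
      exact HasDerivAt.comp 0 h1' (hasDerivAt_neg 0)
    have h3 : (fun r : ℝ => f (-r)) = f := funext heven
    rw [h3] at h2
    have h4 : deriv f 0 = deriv f 0 * (-1) := h1.unique h2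
    have h5 : deriv f 0 = 0 := by linarith
    rwa [h5] at h1
  have hfan0pos : (0:ℝ) < f 0 := hpos 0
  have hFkan : AnalyticAt ℝ Fk 0 :=
    (analyticAt_const.mul ((analyticAt_rlog hfan0pos).comp hfan)).rexp
  have hFkderiv0 : HasDerivAt Fk 0 0 := by
    have h := hfderiv0.log (hpos 0).ne'
    have h2 := h.const_mul (-(1/(k:ℝ)))
    have h3 := h2.exp
    convert h3 using 1
    simp
  set c : ℝ → ℝ := fun t => (Fk t - 1) / t with hcdef
  have hcan : AnalyticAt ℝ c 0 := by
    apply analyticAt_div_id (hFkan.fun_sub analyticAt_const) (by simp [hFk0])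
    have := (hFkderiv0.sub_const 1).deriv
    simpa using this
  have hcodd : ∀ t, c (-t) = -c t := by
    intro t
    rw [hcdef]
    simp only [hFkeven t, div_neg]
  have htc : ∀ t, t * c t = Fk t - 1 := by
    intro t
    rcases eq_or_ne t 0 with rfl | ht
    · simp [hcdef, hFk0]
    · rw [hcdef]; field_simp
  obtain ⟨A, hAan, hA0, hAderiv⟩ := exists_primitive_analytic hcan
  obtain ⟨ε, hε, hball⟩ := Metric.eventually_nhds_iff_ball.mp hAderiv
  have hAeven : ∀ y ∈ Metric.ball (0:ℝ) ε, A (-y) = A y := by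
    intro y hy
    set V : ℝ → ℝ := fun z => A z - A (-z) with hVdef
    have hV : ∀ z ∈ Metric.ball (0:ℝ) ε, HasDerivAt V 0 z := by
      intro z hz
      have hz' : -z ∈ Metric.ball (0:ℝ) ε := by
        simpa [Metric.mem_ball, abs_neg] using hz
      have h1 : HasDerivAt A (c z) z := hball z hz
      have h2 : HasDerivAt (fun w : ℝ => A (-w)) (c (-z) * (-1)) z :=
        HasDerivAt.comp z (hball (-z) hz') (hasDerivAt_neg z)
      have h3 : HasDerivAt V (c z - c (-z) * -1) z := h1.fun_sub h2
      convert h3 using 1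
      rw [hcodd]; ring
    have hconst : V y = V 0 := by
      apply Convex.is_const_of_fderivWithin_eq_zero (convex_ball (0:ℝ) ε)
        (fun x hx => (hV x hx).differentiableAt.differentiableWithinAt)
        (fun x hx => ?_) hy (Metric.mem_ball_self hε)
      rw [fderivWithin_of_isOpen Metric.isOpen_ball hx]
      have := (hV x hx).hasFDerivAt.fderiv
      rw [this]
      ext
      simp
    have : V 0 = 0 := by simp [hVdef]
    rw [this] at hconst
    have := sub_eq_zero.mp hconst
    exact this.symm
  set aa : ℝ → ℝ := fun y => Real.exp (A y) with haadef
  refine ⟨fun y => y * aa y, aa, Fk, ?_, fun y => rfl, fun y => Real.exp_pos _, by simp [haadef, hA0],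
    hFkpow, hFkpos, hFk0, ?_, ?_⟩
  · exact (analyticAt_id).mul hAan.rexp
  · filter_upwards [Metric.ball_mem_nhds (0:ℝ) hε] with y hy
    simp only [haadef]
    rw [hAeven y hy]
  · filter_upwards [hAderiv] with y hy
    have h1 : HasDerivAt aa (Real.exp (A y) * c y) y := hy.exp
    have h2 := (hasDerivAt_id y).mul h1
    have h3 : aa y * Fk y = 1 * aa y + id y * (Real.exp (A y) * c y) := by
      have h4 : id y * (Real.exp (A y) * c y) = aa y * (y * c y) := by
        simp only [haadef, id]; ring
      rw [h4, htc y]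
      simp only [haadef]
      ring
    rw [h3]
    exact h2

theorem aux_inverse {φ : ℝ → ℝ} (hφan : AnalyticAt ℝ φ 0) (hφ0 : φ 0 = 0)
    (hφd : HasDerivAt φ 1 0) (hφodd : ∀ᶠ y in 𝓝 (0:ℝ), φ (-y) = -φ y) :
    ∃ ι : ℝ → ℝ, AnalyticAt ℝ ι 0 ∧ ι 0 = 0 ∧ ContinuousAt ι 0 ∧
      (∀ᶠ z in 𝓝 (0:ℝ), φ (ι z) = z) ∧ (∀ᶠ z in 𝓝 (0:ℝ), ι (-z) = -ι z) := by
  obtain ⟨p, hp⟩ := hφan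
  have hp11 : (p 1 fun _ => (1:ℝ)) = 1 := by
    have h1 := hp.deriv
    have h2 := hφd.deriv
    rw [h2] at h1
    exact h1.symm
  have hp1 : p 1 = (continuousMultilinearCurryFin1 ℝ ℝ ℝ).symm
      ((ContinuousLinearEquiv.refl ℝ ℝ : ℝ ≃L[ℝ] ℝ) : ℝ →L[ℝ] ℝ) := by
    apply ContinuousMultilinearMap.ext
    intro v
    have hv : v = fun _ => v 0 := funext fun i => by rw [Subsingleton.elim i 0]
    rw [hv]
    have h3 : (p 1 fun _ => v 0) = (v 0) ^ 1 • p.coeff 1 :=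
      FormalMultilinearSeries.apply_eq_pow_smul_coeff
    have h4 : p.coeff 1 = p 1 fun _ => (1:ℝ) := rfl
    rw [h3, h4, hp11]
    simp
  have hstrict0 := hp.hasStrictFDerivAt
  have hstrict : HasStrictFDerivAt φ
      (((ContinuousLinearEquiv.refl ℝ ℝ : ℝ ≃L[ℝ] ℝ)) : ℝ →L[ℝ] ℝ) 0 := by
    rw [hp1] at hstrict0
    simpa using hstrict0
  set Φ := hstrict.toOpenPartialHomeomorph φ with hΦdef
  have hcoe : ⇑Φ = φ := hstrict.toOpenPartialHomeomorph_coe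
  have hsource : (0:ℝ) ∈ Φ.source := hstrict.mem_toOpenPartialHomeomorph_source
  have hΦ00 : Φ 0 = 0 := by rw [hcoe] at *; exact hφ0
  have htarget : (0:ℝ) ∈ Φ.target := by
    have := Φ.map_source hsource
    rwa [hΦ00] at this
  set ι : ℝ → ℝ := ⇑Φ.symm with hιdef
  have hι0 : ι 0 = 0 := by
    have := Φ.left_inv hsource
    rw [hΦ00] at this
    exact this
  have hιcont : ContinuousAt ι 0 := by
    have := Φ.symm.continuousAt (by simpa [PartialHomeomorph.symm_source] using htarget)
    exact this
  have hιan : AnalyticAt ℝ ι 0 := by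
    have hpφ : HasFPowerSeriesAt (⇑Φ) p 0 := by rw [hcoe]; exact hp
    have hsymm := Φ.hasFPowerSeriesAt_symm hsource hpφ hp1
    rw [hΦ00] at hsymm
    exact ⟨_, hsymm⟩
  have hrinv : ∀ᶠ z in 𝓝 (0:ℝ), φ (ι z) = z := by
    filter_upwards [Φ.open_target.mem_nhds htarget] with z hz
    have := Φ.right_inv hz
    rwa [hcoe] at this
  refine ⟨ι, hιan, hι0, hιcont, hrinv, ?_⟩
  have h1 : ∀ᶠ z in 𝓝 (0:ℝ), z ∈ Φ.target := Φ.open_target.mem_nhds htarget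
  have h2 : ∀ᶠ z in 𝓝 (0:ℝ), -z ∈ Φ.target := by
    have hneg : Filter.Tendsto (fun z : ℝ => -z) (𝓝 0) (𝓝 0) := by
      simpa using (continuous_neg.tendsto (0:ℝ))
    exact hneg.eventually h1
  have h3 : ∀ᶠ z in 𝓝 (0:ℝ), -ι z ∈ Φ.source := by
    have hU : {w : ℝ | -w ∈ Φ.source} ∈ 𝓝 (0:ℝ) := by
      have hneg : Filter.Tendsto (fun z : ℝ => -z) (𝓝 0) (𝓝 0) := by
        simpa using (continuous_neg.tendsto (0:ℝ))
      exact hneg.eventually (Φ.open_source.mem_nhds hsource)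
    have := hιcont.eventually_mem (by rwa [hι0])
    exact this
  have h4 : ∀ᶠ z in 𝓝 (0:ℝ), φ (-ι z) = -φ (ι z) := by
    have := hιcont.eventually (by rwa [hι0] : ∀ᶠ y in 𝓝 (ι 0), φ (-y) = -φ y)
    exact this
  filter_upwards [h1, h2, h3, h4, hrinv] with z hz1 hz2 hz3 hz4 hz5
  have e2 : φ (ι (-z)) = -z := by
    have := Φ.right_inv hz2
    rwa [hcoe] at this
  have e3 : φ (-ι z) = -z := by rw [hz4, hz5]
  have hmem1 : ι (-z) ∈ Φ.source := Φ.map_target hz2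
  apply Φ.injOn hmem1 hz3
  rw [hcoe]
  rw [e2, e3]

/-- Lemma 2.3 of Gilkey–Park, real analytic case: if the data is real analytic near `0`,
the odd solution `η` of `f₁(η(r)) = η(r)^(1−m) r^(m−1) η'(r)^(m−1) f₂(r)` is real
analytic on `(−δ, δ)`. -/
theorem stmt_1 (m : ℕ) (hm : 4 ≤ m) (f₁ f₂ : ℝ → ℝ)
    (hf₁ : ContDiff ℝ (⊤ : ℕ∞) f₁) (hf₂ : ContDiff ℝ (⊤ : ℕ∞) f₂)
    (hf₁even : ∀ r : ℝ, f₁ (-r) = f₁ r) (hf₂even : ∀ r : ℝ, f₂ (-r) = f₂ r)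
    (hf₁pos : ∀ r : ℝ, 0 < f₁ r) (hf₂pos : ∀ r : ℝ, 0 < f₂ r)
    (hf₁0 : f₁ 0 = 1) (hf₂0 : f₂ 0 = 1)
    (hf₁an : ∃ U ∈ nhds (0 : ℝ), AnalyticOnNhd ℝ f₁ U)
    (hf₂an : ∃ U ∈ nhds (0 : ℝ), AnalyticOnNhd ℝ f₂ U) :
    ∃ δ > (0 : ℝ), ∃ η : ℝ → ℝ,
      AnalyticOnNhd ℝ η (Set.Ioo (-δ) δ) ∧
      (∀ r : ℝ, η (-r) = -η r) ∧
      deriv η 0 = 1 ∧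
      (∀ r : ℝ, 0 < r → r < δ → 0 < η r) ∧
      (∀ r : ℝ, 0 < r → r < δ →
        f₁ (η r) * (η r) ^ (m - 1) = r ^ (m - 1) * (deriv η r) ^ (m - 1) * f₂ r) := by
  set k := m - 1 with hkdef
  have hk : k ≠ 0 := by omega
  obtain ⟨U₁, hU₁, hf₁U⟩ := hf₁an
  obtain ⟨U₂, hU₂, hf₂U⟩ := hf₂an
  have hf₁a : AnalyticAt ℝ f₁ 0 := hf₁U 0 (mem_of_mem_nhds hU₁)
  have hf₂a : AnalyticAt ℝ f₂ 0 := hf₂U 0 (mem_of_mem_nhds hU₂)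
  obtain ⟨φ, a, F, hφan, hφeq, hapos, ha0, hFpow, hFpos, hF0, haev, hφder⟩ :=
    aux_phi k hk f₁ hf₁ hf₁even hf₁pos hf₁0 hf₁a
  obtain ⟨ψ, b, G, hψan, hψeq, hbpos, hb0, hGpow, hGpos, hG0, hbev, hψder⟩ :=
    aux_phi k hk f₂ hf₂ hf₂even hf₂pos hf₂0 hf₂a
  have hφ0 : φ 0 = 0 := by rw [hφeq]; ring
  have hψ0 : ψ 0 = 0 := by rw [hψeq]; ring
  have hφd1 : HasDerivAt φ 1 0 := by
    have h := hφder.self_of_nhds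
    rwa [ha0, hF0, mul_one] at h
  have hφodd : ∀ᶠ y in 𝓝 (0:ℝ), φ (-y) = -φ y := by
    filter_upwards [haev] with y hy
    rw [hφeq, hφeq, hy]; ring
  obtain ⟨ι, hιan, hι0, hιcont, hrinv, hιodd⟩ := aux_inverse hφan hφ0 hφd1 hφodd
  set g : ℝ → ℝ := fun r => ι (ψ r) with hgdef
  have hg0 : g 0 = 0 := by rw [hgdef]; simp only; rw [hψ0, hι0]
  have hψcont : ContinuousAt ψ 0 := hψan.continuousAt
  have hψct : Filter.Tendsto ψ (𝓝 0) (𝓝 0) := by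
    have := hψcont; rwa [ContinuousAt, hψ0] at this
  have hgan : AnalyticAt ℝ g 0 := by
    have h : AnalyticAt ℝ ι (ψ 0) := by rwa [hψ0]
    exact h.comp hψan
  have hgcont : ContinuousAt g 0 := hgan.continuousAt
  have hgt : Filter.Tendsto g (𝓝 0) (𝓝 0) := by
    have := hgcont; rwa [ContinuousAt, hg0] at this
  -- eventually facts
  have E1 : ∀ᶠ r in 𝓝 (0:ℝ), φ (g r) = ψ r := hψct.eventually hrinv
  have E2 : ∀ᶠ r in 𝓝 (0:ℝ), g (-r) = -g r := by
    have hψodd : ∀ᶠ r in 𝓝 (0:ℝ), ψ (-r) = -ψ r := by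
      filter_upwards [hbev] with r hr; rw [hψeq, hψeq, hr]; ring
    have hι' : ∀ᶠ r in 𝓝 (0:ℝ), ι (-ψ r) = -ι (ψ r) := hψct.eventually hιodd
    filter_upwards [hψodd, hι'] with r h1 h2
    rw [hgdef]; simp only; rw [h1, h2]
  have E3 : ∀ᶠ r in 𝓝 (0:ℝ), AnalyticAt ℝ g r := hgan.eventually_analyticAt
  have E4 : ∀ᶠ r in 𝓝 (0:ℝ), HasDerivAt φ (a (g r) * F (g r)) (g r) := hgt.eventually hφder
  have E5 : ∀ᶠ r in 𝓝 (0:ℝ), HasDerivAt ψ (b r * G r) r := hψder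
  obtain ⟨δ, hδ, hball⟩ := Metric.eventually_nhds_iff_ball.mp
    (E1.and (E2.and (E3.and (E4.and E5))))
  have hmemball : ∀ r : ℝ, |r| < δ → r ∈ Metric.ball (0:ℝ) δ := by
    intro r hr; rw [Metric.mem_ball, Real.dist_eq, sub_zero]; exact hr
  have hP : ∀ r : ℝ, |r| < δ →
      (φ (g r) = ψ r ∧ g (-r) = -g r ∧ AnalyticAt ℝ g r ∧
        HasDerivAt φ (a (g r) * F (g r)) (g r) ∧ HasDerivAt ψ (b r * G r) r) :=
    fun r hr => hball r (hmemball r hr)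
  set η : ℝ → ℝ := fun r => if r ∈ Set.Ioo (-δ) δ then g r else r with hηdef
  have hmemIoo : ∀ r : ℝ, r ∈ Set.Ioo (-δ) δ ↔ |r| < δ := by
    intro r; rw [Set.mem_Ioo, abs_lt]
  have hηg : ∀ r : ℝ, |r| < δ → η r = g r := by
    intro r hr; rw [hηdef]; simp only; rw [if_pos ((hmemIoo r).mpr hr)]
  have hηgev : ∀ r : ℝ, |r| < δ → η =ᶠ[𝓝 r] g := by
    intro r hr
    filter_upwards [Metric.isOpen_ball.mem_nhds (hmemball r hr)] with x hx
    rw [Metric.mem_ball, Real.dist_eq, sub_zero] at hx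
    exact hηg x hx
  -- key derivative identity
  have hkey : ∀ r : ℝ, |r| < δ →
      a (g r) * F (g r) * deriv g r = b r * G r := by
    intro r hr
    obtain ⟨h1, h2, h3, h4, h5⟩ := hP r hr
    have hgd : HasDerivAt g (deriv g r) r := h3.differentiableAt.hasDerivAt
    have hcomp : HasDerivAt (φ ∘ g) (a (g r) * F (g r) * deriv g r) r := h4.comp r hgd
    have hcong : ψ =ᶠ[𝓝 r] (φ ∘ g) := by
      filter_upwards [Metric.isOpen_ball.mem_nhds (hmemball r hr)] with x hx
      rw [Metric.mem_ball, Real.dist_eq, sub_zero] at hx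
      exact ((hP x hx).1).symm
    have hψd : HasDerivAt ψ (a (g r) * F (g r) * deriv g r) r :=
      hcomp.congr_of_eventuallyEq hcong
    exact hψd.unique h5
  have h0δ : |(0:ℝ)| < δ := by rwa [abs_zero]
  -- deriv g 0 = 1
  have hdg0 : deriv g 0 = 1 := by
    have h := hkey 0 h0δ
    rw [hg0, ha0, hF0, hb0, hG0] at h
    linarith
  refine ⟨δ, hδ, η, ?_, ?_, ?_, ?_, ?_⟩
  · -- AnalyticOnNhd
    intro r hr
    have hr' : |r| < δ := (hmemIoo r).mp hr
    exact ((hP r hr').2.2.1).congr (hηgev r hr').symm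
  · -- odd
    intro r
    by_cases hr : |r| < δ
    · have hr2 : |(-r)| < δ := by rwa [abs_neg]
      rw [hηg _ hr2, hηg _ hr]
      exact (hP r hr).2.1
    · have hr2 : ¬ (-r ∈ Set.Ioo (-δ) δ) := by rw [hmemIoo, abs_neg]; exact hr
      have hr3 : ¬ (r ∈ Set.Ioo (-δ) δ) := by rw [hmemIoo]; exact hr
      rw [hηdef]; simp only; rw [if_neg hr2, if_neg hr3]
  · -- deriv at 0
    rw [Filter.EventuallyEq.deriv_eq (hηgev 0 h0δ)]
    exact hdg0
  · -- positivity
    intro r hr0 hrδ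
    have hr : |r| < δ := by rw [abs_lt]; constructor <;> linarith
    rw [hηg r hr]
    have h1 := (hP r hr).1
    have hψpos : 0 < ψ r := by rw [hψeq]; exact mul_pos hr0 (hbpos r)
    by_contra h
    push_neg at h
    have : φ (g r) ≤ 0 := by
      rw [hφeq]
      exact mul_nonpos_of_nonpos_of_nonneg h (hapos (g r)).le
    rw [h1] at this
    linarith
  · -- main equation
    intro r hr0 hrδ
    have hr : |r| < δ := by rw [abs_lt]; constructor <;> linarith
    rw [hηg r hr, Filter.EventuallyEq.deriv_eq (hηgev r hr)]
    set y := g r with hydef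
    set d := deriv g r with hddef
    have h1 := (hP r hr).1
    have key : d * (a y * F y) = b r * G r := by
      have := hkey r hr; linarith [hkey r hr]
    have hMne : (a y * F y) ^ k ≠ 0 := pow_ne_zero _ (mul_pos (hapos y) (hFpos y)).ne'
    have e0 : (d * (a y * F y)) ^ k = (b r * G r) ^ k := by rw [key]
    have echain : (r ^ k * d ^ k * f₂ r) * (a y * F y) ^ k = (f₁ y * y ^ k) * (a y * F y) ^ k := by
      calc (r ^ k * d ^ k * f₂ r) * (a y * F y) ^ k
          = r ^ k * ((d * (a y * F y)) ^ k) * f₂ r := by rw [mul_pow]; ring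
        _ = r ^ k * ((b r * G r) ^ k) * f₂ r := by rw [e0]
        _ = (r * b r) ^ k * (f₂ r * G r ^ k) := by rw [mul_pow, mul_pow]; ring
        _ = (r * b r) ^ k := by rw [hGpow r, mul_one]
        _ = (y * a y) ^ k := by rw [← hψeq, ← h1, hφeq]
        _ = (f₁ y * F y ^ k) * (y * a y) ^ k := by rw [hFpow y, one_mul]
        _ = (f₁ y * y ^ k) * (a y * F y) ^ k := by rw [mul_pow, mul_pow]; ring
    exact (mul_right_cancel₀ hMne echain).symm
end

section
/- Let m ≥ 4 be an integer and let f₁, f₂ : ℝ → ℝ be smooth even functions with fᵢ(r) > 0 for all r and f₁(0) = f₂(0) = 1. Suppose δ > 0 and, for j = 1, 2, the function ηⱼ : ℝ → ℝ is differentiable on (0, δ) with ηⱼ(r) > 0 and ηⱼ'(r) > 0 for all r ∈ (0, δ), satisfies ηⱼ(r)/r → 1 as r → 0⁺, and satisfies f₁(ηⱼ(r)) · ηⱼ(r)^(m−1) = r^(m−1) · ηⱼ'(r)^(m−1) · f₂(r) for all r ∈ (0, δ). Then there exists δ' ∈ (0, δ] such that η₁(r) = η₂(r) for all r ∈ (0,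 δ'). -/
open Real Set Filter

private lemma aux_sub_le (a b : ℝ) (hb : 0 < b) (hba : b ≤ a) :
    a - b ≤ a * (Real.log a - Real.log b) := by
  have ha : 0 < a := lt_of_lt_of_le hb hba
  have h := Real.log_le_sub_one_of_pos (div_pos hb ha)
  rw [Real.log_div hb.ne' ha.ne'] at h
  have h2 : a * (Real.log b - Real.log a) ≤ a * (b / a - 1) :=
    mul_le_mul_of_nonneg_left h ha.le
  have h3 : a * (b / a - 1) = b - a := by field_simp
  nlinarith

private lemma aux_abs_sub_le (a b M : ℝ) (ha : 0 < a) (hb : 0 < b)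
    (haM : a ≤ M) (hbM : b ≤ M) : |a - b| ≤ M * |Real.log a - Real.log b| := by
  rcases le_total b a with h | h
  · have h1 := aux_sub_le a b hb h
    have hlog : Real.log b ≤ Real.log a := Real.log_le_log hb h
    rw [abs_of_nonneg (by linarith), abs_of_nonneg (by linarith)]
    nlinarith
  · have h1 := aux_sub_le b a ha h
    have hlog : Real.log a ≤ Real.log b := Real.log_le_log ha h
    rw [abs_of_nonpos (by linarith), abs_of_nonpos (by linarith)]
    nlinarith

/-- Uniqueness in Lemma 2.3 of Gilkey–Park: two positive increasing solutions of
`f₁(η(r)) η(r)^(m−1) = r^(m−1) η'(r)^(m−1) f₂(r)` on `(0, δ)` with `η(r)/r → 1`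
as `r → 0⁺` agree near `0`. -/
theorem stmt_2 (m : ℕ) (hm : 4 ≤ m) (f₁ f₂ : ℝ → ℝ)
    (hf₁ : ContDiff ℝ (⊤ : ℕ∞) f₁) (hf₂ : ContDiff ℝ (⊤ : ℕ∞) f₂)
    (hf₁even : ∀ r : ℝ, f₁ (-r) = f₁ r) (hf₂even : ∀ r : ℝ, f₂ (-r) = f₂ r)
    (hf₁pos : ∀ r : ℝ, 0 < f₁ r) (hf₂pos : ∀ r : ℝ, 0 < f₂ r)
    (hf₁0 : f₁ 0 = 1) (hf₂0 : f₂ 0 = 1)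
    (δ : ℝ) (hδ : 0 < δ) (η₁ η₂ : ℝ → ℝ)
    (hdiff : ∀ j ∈ ({η₁, η₂} : Set (ℝ → ℝ)), ∀ r ∈ Set.Ioo (0 : ℝ) δ, DifferentiableAt ℝ j r)
    (hpos : ∀ j ∈ ({η₁, η₂} : Set (ℝ → ℝ)), ∀ r ∈ Set.Ioo (0 : ℝ) δ, 0 < j r)
    (hderivpos : ∀ j ∈ ({η₁, η₂} : Set (ℝ → ℝ)), ∀ r ∈ Set.Ioo (0 : ℝ) δ, 0 < deriv j r)
    (hlim : ∀ j ∈ ({η₁, η₂} : Set (ℝ → ℝ)),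
      Filter.Tendsto (fun r => j r / r) (nhdsWithin 0 (Set.Ioi 0)) (nhds 1))
    (heq : ∀ j ∈ ({η₁, η₂} : Set (ℝ → ℝ)), ∀ r ∈ Set.Ioo (0 : ℝ) δ,
      f₁ (j r) * (j r) ^ (m - 1) = r ^ (m - 1) * (deriv j r) ^ (m - 1) * f₂ r) :
    ∃ δ' : ℝ, 0 < δ' ∧ δ' ≤ δ ∧ ∀ r ∈ Set.Ioo (0 : ℝ) δ', η₁ r = η₂ r := by
  have hmem₁ : η₁ ∈ ({η₁, η₂} : Set (ℝ → ℝ)) := Set.mem_insert _ _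
  have hmem₂ : η₂ ∈ ({η₁, η₂} : Set (ℝ → ℝ)) := Set.mem_insert_of_mem _ rfl
  set n : ℕ := m - 1 with hndef
  have hn0 : n ≠ 0 := by omega
  have hnpos : (0 : ℝ) < (n : ℝ) := by
    have : 0 < n := by omega
    exact_mod_cast this
  set c : ℝ := (n : ℝ)⁻¹ with hcdef
  have hcn : c * (n : ℝ) = 1 := inv_mul_cancel₀ hnpos.ne'
  set F : ℝ → ℝ := fun x => f₁ x ^ c with hFdef
  set G : ℝ → ℝ := fun r => f₂ r ^ c with hGdef
  have hFpow : ∀ x, F x ^ n = f₁ x := by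
    intro x
    rw [hFdef]
    rw [← Real.rpow_natCast (f₁ x ^ c) n, ← Real.rpow_mul (hf₁pos x).le, hcn, Real.rpow_one]
  have hGpow : ∀ r, G r ^ n = f₂ r := by
    intro r
    rw [hGdef]
    rw [← Real.rpow_natCast (f₂ r ^ c) n, ← Real.rpow_mul (hf₂pos r).le, hcn, Real.rpow_one]
  have hFpos : ∀ x, 0 < F x := fun x => Real.rpow_pos_of_pos (hf₁pos x) c
  have hGpos : ∀ r, 0 < G r := fun r => Real.rpow_pos_of_pos (hf₂pos r) c
  have hG0 : G 0 = 1 := by rw [hGdef]; simp [hf₂0]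
  -- derivative of F
  set F' : ℝ → ℝ := fun x => c * f₁ x ^ (c - 1) * deriv f₁ x with hF'def
  have hF' : ∀ x, HasDerivAt F (F' x) x := by
    intro x
    have h1 : HasDerivAt f₁ (deriv f₁ x) x := (hf₁.differentiable (by simp) x).hasDerivAt
    have h2 : HasDerivAt (fun y : ℝ => y ^ c) (c * f₁ x ^ (c - 1)) (f₁ x) :=
      Real.hasDerivAt_rpow_const (Or.inl (hf₁pos x).ne')
    have := h2.comp x h1
    exact this
  have hF'cont : Continuous F' := by
    have h1 : Continuous fun x => f₁ x ^ (c - 1) := by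
      rw [continuous_iff_continuousAt]
      intro x
      exact (Real.continuousAt_rpow_const (f₁ x) (c - 1) (Or.inl (hf₁pos x).ne')).comp
        (hf₁.continuous.continuousAt)
    exact ((continuous_const.mul h1).mul (hf₁.continuous_deriv (by simp)))
  obtain ⟨C₀, hC₀⟩ := (isCompact_Icc (a := (0:ℝ)) (b := 2*δ)).exists_bound_of_continuousOn
    hF'cont.continuousOn
  set C : ℝ := max C₀ 0 with hCdef
  have hCnonneg : 0 ≤ C := le_max_right _ _
  have hFlip : ∀ a b : ℝ, a ∈ Icc (0:ℝ) (2*δ) → b ∈ Icc (0:ℝ) (2*δ) →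
      |F a - F b| ≤ C * |a - b| := by
    intro a b haI hbI
    have := (convex_Icc (0:ℝ) (2*δ)).norm_image_sub_le_of_norm_hasDerivWithin_le
      (f := F) (f' := F') (C := C) (fun x _ => (hF' x).hasDerivWithinAt)
      (fun x hx => le_trans (hC₀ x hx) (le_max_left _ _)) hbI haI
    simpa [Real.norm_eq_abs] using this
  -- choose δ₀
  have h1 := (hlim η₁ hmem₁).eventually (Ioo_mem_nhds (by norm_num : (1:ℝ)/2 < 1)
    (by norm_num : (1:ℝ) < 2))
  have h2 := (hlim η₂ hmem₂).eventually (Ioo_mem_nhds (by norm_num : (1:ℝ)/2 < 1)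
    (by norm_num : (1:ℝ) < 2))
  have hGc : ContinuousAt G 0 := by
    exact (Real.continuousAt_rpow_const (f₂ 0) c (Or.inl (hf₂pos 0).ne')).comp
      (hf₂.continuous.continuousAt)
  have h3 : ∀ᶠ r in nhdsWithin (0:ℝ) (Set.Ioi 0), 1/2 < G r := by
    have : ∀ᶠ r in nhds (0:ℝ), 1/2 < G r := by
      have := hGc.eventually_mem (s := Set.Ioi (1/2 : ℝ))
        (by rw [hG0]; exact Ioi_mem_nhds (by norm_num))
      filter_upwards [this] with r hr using hr
    exact this.filter_mono nhdsWithin_le_nhds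
  have hall := (h1.and (h2.and h3))
  obtain ⟨u, hu, hsub⟩ := mem_nhdsGT_iff_exists_Ioo_subset.mp hall
  set δ₀ : ℝ := min u δ with hδ₀def
  have hδ₀pos : 0 < δ₀ := lt_min hu hδ
  have hδ₀le : δ₀ ≤ δ := min_le_right _ _
  have hsubδ : Set.Ioo (0:ℝ) δ₀ ⊆ Set.Ioo (0:ℝ) δ := fun r hr =>
    ⟨hr.1, lt_of_lt_of_le hr.2 hδ₀le⟩
  have hprop : ∀ r ∈ Set.Ioo (0:ℝ) δ₀,
      η₁ r / r ∈ Set.Ioo (1/2:ℝ) 2 ∧ η₂ r / r ∈ Set.Ioo (1/2:ℝ) 2 ∧ 1/2 < G r := by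
    intro r hr
    exact hsub ⟨hr.1, lt_of_lt_of_le hr.2 (min_le_left _ _)⟩
  -- key ODE identity
  have hkey : ∀ j ∈ ({η₁, η₂} : Set (ℝ → ℝ)), ∀ r ∈ Set.Ioo (0:ℝ) δ,
      deriv j r * (r * G r) = F (j r) * j r := by
    intro j hj r hr
    have hjr := hpos j hj r hr
    have hj' := hderivpos j hj r hr
    have he := heq j hj r hr
    have hA : (F (j r) * j r) ^ n = (r * deriv j r * G r) ^ n := by
      rw [mul_pow, mul_pow, mul_pow, hFpow, hGpow]
      exact he
    have hinj := (pow_left_strictMonoOn₀ (M₀ := ℝ) hn0).injOn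
    have hEq : F (j r) * j r = r * deriv j r * G r :=
      hinj (by exact mul_nonneg (hFpos _).le hjr.le)
        (by exact mul_nonneg (mul_nonneg hr.1.le hj'.le) (hGpos _).le) hA
    rw [hEq]; ring
  -- the function w
  set w : ℝ → ℝ := fun s => Real.log (η₁ s) - Real.log (η₂ s) with hwdef
  set w' : ℝ → ℝ := fun s => (F (η₁ s) - F (η₂ s)) / (s * G s) with hw'def
  have hw : ∀ r ∈ Set.Ioo (0:ℝ) δ₀, HasDerivAt w (w' r) r := by
    intro r hr
    have hrδ : r ∈ Set.Ioo (0:ℝ) δ := hsubδ hr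
    have hp₁ := hpos η₁ hmem₁ r hrδ
    have hp₂ := hpos η₂ hmem₂ r hrδ
    have h₁ : HasDerivAt (fun s => Real.log (η₁ s)) ((η₁ r)⁻¹ * deriv η₁ r) r :=
      (Real.hasDerivAt_log hp₁.ne').comp r (hdiff η₁ hmem₁ r hrδ).hasDerivAt
    have h₂ : HasDerivAt (fun s => Real.log (η₂ s)) ((η₂ r)⁻¹ * deriv η₂ r) r :=
      (Real.hasDerivAt_log hp₂.ne').comp r (hdiff η₂ hmem₂ r hrδ).hasDerivAt
    have hsum := h₁.sub h₂
    have k₁ := hkey η₁ hmem₁ r hrδ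
    have k₂ := hkey η₂ hmem₂ r hrδ
    have hrG : (0:ℝ) < r * G r := mul_pos hr.1 (hGpos r)
    have heq' : w' r = (η₁ r)⁻¹ * deriv η₁ r - (η₂ r)⁻¹ * deriv η₂ r := by
      rw [hw'def]
      field_simp
      rw [div_eq_iff hrG.ne']
      linear_combination (-(η₂ r)) * k₁ + η₁ r * k₂
    rw [heq']
    exact hsum
  -- bound on the derivative
  set K : ℝ := 4 * C with hKdef
  have hKnonneg : (0:ℝ) ≤ K := by positivity
  have hbound : ∀ s ∈ Set.Ioo (0:ℝ) δ₀, ‖w' s‖ ≤ K * ‖w s‖ + 0 := by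
    intro s hs
    obtain ⟨hq₁, hq₂, hG2⟩ := hprop s hs
    have hs0 : 0 < s := hs.1
    have hsδ : s < δ := lt_of_lt_of_le hs.2 hδ₀le
    have hb₁ : s/2 < η₁ s := by
      have := hq₁.1; rw [lt_div_iff₀ hs0] at this; linarith
    have hb₁' : η₁ s < 2*s := by
      have := hq₁.2; rw [div_lt_iff₀ hs0] at this; linarith
    have hb₂ : s/2 < η₂ s := by
      have := hq₂.1; rw [lt_div_iff₀ hs0] at this; linarith
    have hb₂' : η₂ s < 2*s := by
      have := hq₂.2; rw [div_lt_iff₀ hs0] at this; linarith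
    have hp₁ : 0 < η₁ s := lt_trans (by positivity) hb₁
    have hp₂ : 0 < η₂ s := lt_trans (by positivity) hb₂
    have hmA : η₁ s ∈ Icc (0:ℝ) (2*δ) := ⟨hp₁.le, by linarith⟩
    have hmB : η₂ s ∈ Icc (0:ℝ) (2*δ) := ⟨hp₂.le, by linarith⟩
    have hFd : |F (η₁ s) - F (η₂ s)| ≤ C * |η₁ s - η₂ s| := hFlip _ _ hmA hmB
    have hηd : |η₁ s - η₂ s| ≤ (2*s) * |w s| :=
      aux_abs_sub_le (η₁ s) (η₂ s) (2*s) hp₁ hp₂ hb₁'.le hb₂'.le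
    have hsG : s/2 ≤ s * G s := by nlinarith
    have hsGpos : (0:ℝ) < s * G s := mul_pos hs0 (hGpos s)
    have hnum : |F (η₁ s) - F (η₂ s)| ≤ C * ((2*s) * |w s|) := by
      calc |F (η₁ s) - F (η₂ s)| ≤ C * |η₁ s - η₂ s| := hFd
      _ ≤ C * ((2*s) * |w s|) := mul_le_mul_of_nonneg_left hηd hCnonneg
    have hdiv : |F (η₁ s) - F (η₂ s)| / (s * G s) ≤ C * ((2*s) * |w s|) / (s/2) :=
      div_le_div₀ (by positivity) hnum (by positivity) hsG
    have hrw : C * ((2*s) * |w s|) / (s/2) = K * |w s| := by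
      rw [hKdef]; field_simp; ring
    have : ‖w' s‖ = |F (η₁ s) - F (η₂ s)| / (s * G s) := by
      rw [hw'def, Real.norm_eq_abs, abs_div, abs_of_pos hsGpos]
    rw [this, add_zero, Real.norm_eq_abs]
    calc |F (η₁ s) - F (η₂ s)| / (s * G s) ≤ C * ((2*s) * |w s|) / (s/2) := hdiv
    _ = K * |w s| := hrw
  -- conclude
  refine ⟨δ₀, hδ₀pos, hδ₀le, ?_⟩
  intro t ht
  have htδ : t ∈ Set.Ioo (0:ℝ) δ := hsubδ ht
  have hwt : w t = 0 := by
    have hev : ∀ᶠ a in nhdsWithin (0:ℝ) (Set.Ioi 0),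
        ‖w t‖ ≤ ‖w a‖ * Real.exp (K * δ₀) := by
      filter_upwards [Ioo_mem_nhdsGT ht.1] with a ha
      have hIcc : Set.Icc a t ⊆ Set.Ioo (0:ℝ) δ₀ := fun s hs =>
        ⟨lt_of_lt_of_le ha.1 hs.1, lt_of_le_of_lt hs.2 ht.2⟩
      have hgron := norm_le_gronwallBound_of_norm_deriv_right_le
        (f := w) (f' := w') (δ := ‖w a‖) (K := K) (ε := 0) (a := a) (b := t)
        (fun s hs => ((hw s (hIcc hs)).continuousAt).continuousWithinAt)
        (fun s hs => (hw s (hIcc ⟨hs.1, hs.2.le⟩)).hasDerivWithinAt)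
        le_rfl
        (fun s hs => hbound s (hIcc ⟨hs.1, hs.2.le⟩))
        t ⟨ha.2.le, le_rfl⟩
      rw [gronwallBound_ε0] at hgron
      calc ‖w t‖ ≤ ‖w a‖ * Real.exp (K * (t - a)) := hgron
      _ ≤ ‖w a‖ * Real.exp (K * δ₀) := by
          apply mul_le_mul_of_nonneg_left _ (norm_nonneg _)
          apply Real.exp_le_exp.mpr
          apply mul_le_mul_of_nonneg_left _ hKnonneg
          have := ht.2; have := ha.1; linarith
    have hw0 : Tendsto w (nhdsWithin (0:ℝ) (Set.Ioi 0)) (nhds 0) := by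
      have hl₁ : Tendsto (fun a => Real.log (η₁ a / a)) (nhdsWithin (0:ℝ) (Set.Ioi 0))
          (nhds 0) := by
        have := (Real.continuousAt_log one_ne_zero).tendsto.comp (hlim η₁ hmem₁)
        simpa [Function.comp_def] using this
      have hl₂ : Tendsto (fun a => Real.log (η₂ a / a)) (nhdsWithin (0:ℝ) (Set.Ioi 0))
          (nhds 0) := by
        have := (Real.continuousAt_log one_ne_zero).tendsto.comp (hlim η₂ hmem₂)
        simpa [Function.comp_def] using this
      have heqw : ∀ᶠ a in nhdsWithin (0:ℝ) (Set.Ioi 0),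
          Real.log (η₁ a / a) - Real.log (η₂ a / a) = w a := by
        filter_upwards [Ioo_mem_nhdsGT hδ₀pos] with a ha
        have haδ : a ∈ Set.Ioo (0:ℝ) δ := hsubδ ha
        have hp₁ := hpos η₁ hmem₁ a haδ
        have hp₂ := hpos η₂ hmem₂ a haδ
        rw [Real.log_div hp₁.ne' ha.1.ne', Real.log_div hp₂.ne' ha.1.ne', hwdef]
        ring
      have := (hl₁.sub hl₂).congr' heqw
      simpa using this
    have hlim0 : Tendsto (fun a => ‖w a‖ * Real.exp (K * δ₀))
        (nhdsWithin (0:ℝ) (Set.Ioi 0)) (nhds 0) := by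
      have := (hw0.norm).mul_const (Real.exp (K * δ₀))
      simpa using this
    have hle : ‖w t‖ ≤ 0 := ge_of_tendsto hlim0 hev
    exact norm_le_zero_iff.mp hle
  have hp₁ := hpos η₁ hmem₁ t htδ
  have hp₂ := hpos η₂ hmem₂ t htδ
  have hlog : Real.log (η₁ t) = Real.log (η₂ t) := by
    have : Real.log (η₁ t) - Real.log (η₂ t) = 0 := hwt
    linarith
  exact Real.log_injOn_pos (Set.mem_Ioi.mpr hp₁) (Set.mem_Ioi.mpr hp₂) hlog
end

section
/- Let m ≥ 4 be an integer and let f : ℝ → ℝ be a smooth even function with f(r) > 0 for all r and f(0) = 1. Define η : ℝ → ℝ by η(r) = r · exp( ∫₀^r (f(t)^(1/(1−m)) − 1)/t dt ), where the integrand t ↦ (f(t)^(1/(1−m)) − 1)/t has a removable singularity at t = 0 and the integral is the interval integral from 0 to r. Then η is smooth on ℝ, odd, η'(0) = 1, η(r) > 0 for r > 0, and η(r)^(m−1) = r^(m−1) · η'(r)^(m−1) · f(r) for all r ≥ 0. -/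
open MeasureTheory Filter Set

private lemma hasDerivAt_param (ψ : ℝ → ℝ) (hψ : ContDiff ℝ (⊤ : ℕ∞) ψ) (k : ℕ) (x₀ : ℝ) :
    HasDerivAt (fun x => ∫ s in (0:ℝ)..1, s ^ k * ψ (s * x))
      (∫ s in (0:ℝ)..1, s ^ (k + 1) * deriv ψ (s * x₀)) x₀ := by
  have hψ1 : ContDiff ℝ (⊤ : ℕ∞) (deriv ψ) := (contDiff_infty_iff_deriv.mp hψ).2
  have hcd : Continuous (deriv ψ) := hψ1.continuous
  have hψc : Continuous ψ := hψ.continuous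
  have hdiff : Differentiable ℝ ψ := (contDiff_infty_iff_deriv.mp hψ).1
  obtain ⟨C, hC⟩ := (isCompact_closedBall (0:ℝ) (|x₀| + 1)).exists_bound_of_continuousOn
    hcd.continuousOn
  have := intervalIntegral.hasDerivAt_integral_of_dominated_loc_of_deriv_le (μ := volume)
    (a := 0) (b := 1)
    (F := fun x s => s ^ k * ψ (s * x)) (F' := fun x s => s ^ (k + 1) * deriv ψ (s * x))
    (x₀ := x₀) (bound := fun _ => C)
    (Metric.ball_mem_nhds x₀ one_pos)
    (Filter.Eventually.of_forall fun x =>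
      (by fun_prop : Continuous fun s : ℝ => s ^ k * ψ (s * x)).aestronglyMeasurable)
    (Continuous.intervalIntegrable (by fun_prop) _ _)
    ((by fun_prop : Continuous fun s : ℝ => s ^ (k + 1) * deriv ψ (s * x₀)).aestronglyMeasurable)
    (Filter.Eventually.of_forall fun s hs x hx => ?_)
    intervalIntegrable_const
    (Filter.Eventually.of_forall fun s hs x hx => ?_)
  · exact this.2
  · rw [Set.uIoc_of_le zero_le_one] at hs
    obtain ⟨hs0, hs1⟩ := hs
    rw [Metric.mem_ball, Real.dist_eq] at hx
    have hmem : s * x ∈ Metric.closedBall (0:ℝ) (|x₀| + 1) := by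
      rw [Metric.mem_closedBall, Real.dist_eq, sub_zero, abs_mul, abs_of_pos hs0]
      have : |x| ≤ |x₀| + 1 := by
        have := abs_sub_abs_le_abs_sub x x₀
        linarith
      nlinarith [abs_nonneg x]
    rw [norm_mul, norm_pow, Real.norm_eq_abs, abs_of_pos hs0]
    have h1 : s ^ (k + 1) ≤ 1 := pow_le_one₀ hs0.le hs1
    have h2 := hC _ hmem
    have h3 : 0 ≤ ‖deriv ψ (s * x)‖ := norm_nonneg _
    nlinarith [pow_nonneg hs0.le (k + 1)]
  · have h : HasDerivAt (fun x => s ^ k * ψ (s * x)) (s ^ k * (deriv ψ (s * x) * (s * 1))) x :=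
      ((hdiff (s * x)).hasDerivAt.comp x ((hasDerivAt_id x).const_mul s)).const_mul (s ^ k)
    show HasDerivAt (fun x => s ^ k * ψ (s * x)) (s ^ (k + 1) * deriv ψ (s * x)) x
    convert h using 1
    ring

private lemma contDiff_param_nat (n : ℕ) : ∀ ψ : ℝ → ℝ, ContDiff ℝ (⊤ : ℕ∞) ψ → ∀ k : ℕ,
    ContDiff ℝ n (fun x => ∫ s in (0:ℝ)..1, s ^ k * ψ (s * x)) := by
  induction n with
  | zero =>
    intro ψ hψ k
    exact contDiff_zero.mpr (continuous_iff_continuousAt.mpr fun x =>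
      (hasDerivAt_param ψ hψ k x).continuousAt)
  | succ n ih =>
    intro ψ hψ k
    have hc : ((n + 1 : ℕ) : WithTop ℕ∞) = (n : WithTop ℕ∞) + 1 := by norm_cast
    rw [hc]
    refine contDiff_succ_iff_deriv.mpr ⟨fun x => (hasDerivAt_param ψ hψ k x).differentiableAt,
      by simp, ?_⟩
    have hd : deriv (fun x => ∫ s in (0:ℝ)..1, s ^ k * ψ (s * x)) =
        fun x => ∫ s in (0:ℝ)..1, s ^ (k + 1) * deriv ψ (s * x) :=
      funext fun x => (hasDerivAt_param ψ hψ k x).deriv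
    rw [hd]
    exact ih _ (contDiff_infty_iff_deriv.mp hψ).2 (k + 1)

private lemma contDiff_param (ψ : ℝ → ℝ) (hψ : ContDiff ℝ (⊤ : ℕ∞) ψ) (k : ℕ) :
    ContDiff ℝ (⊤ : ℕ∞) (fun x => ∫ s in (0:ℝ)..1, s ^ k * ψ (s * x)) :=
  contDiff_infty.mpr fun n => contDiff_param_nat n ψ hψ k

open intervalIntegral in
/-- The special case `f₁ ≡ 1` of Lemma 2.3 of Gilkey–Park: the explicit global solution
`η(r) = r · exp(∫₀ʳ (f(t)^(1/(1−m)) − 1)/t dt)` of `η^(m−1) = r^(m−1) η'^(m−1) f`. -/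
theorem stmt_3 (m : ℕ) (hm : 4 ≤ m) (f : ℝ → ℝ)
    (hf : ContDiff ℝ (⊤ : ℕ∞) f) (hfeven : ∀ r : ℝ, f (-r) = f r)
    (hfpos : ∀ r : ℝ, 0 < f r) (hf0 : f 0 = 1)
    (η : ℝ → ℝ)
    (hη : ∀ r : ℝ, η r =
      r * Real.exp (∫ t in (0 : ℝ)..r, (f t ^ ((1 : ℝ) / (1 - (m : ℝ))) - 1) / t)) :
    ContDiff ℝ (⊤ : ℕ∞) η ∧
    (∀ r : ℝ, η (-r) = -η r) ∧
    deriv η 0 = 1 ∧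
    (∀ r : ℝ, 0 < r → 0 < η r) ∧
    (∀ r : ℝ, 0 ≤ r →
      (η r) ^ (m - 1) = r ^ (m - 1) * (deriv η r) ^ (m - 1) * f r) := by
  have hm4 : (4:ℝ) ≤ (m:ℝ) := by exact_mod_cast hm
  have hm1 : (1:ℝ) - (m:ℝ) ≠ 0 := by linarith
  set cexp : ℝ := (1:ℝ)/(1 - (m:ℝ)) with hcexp
  set h : ℝ → ℝ := fun t => f t ^ cexp - 1 with hhdef
  have hh : ContDiff ℝ (⊤ : ℕ∞) h := by
    apply ContDiff.sub _ contDiff_const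
    exact contDiff_iff_contDiffAt.mpr fun x => (hf.contDiffAt).rpow_const_of_ne (hfpos x).ne'
  have hh0 : h 0 = 0 := by simp [hhdef, hf0]
  set G : ℝ → ℝ := dslope h 0 with hGdef
  have hGc : ContDiff ℝ (⊤ : ℕ∞) G := by
    have hhd : Differentiable ℝ h := (contDiff_infty_iff_deriv.mp hh).1
    have hhd' : Continuous (deriv h) := (contDiff_infty_iff_deriv.mp hh).2.continuous
    have hrep : G = fun x => ∫ s in (0:ℝ)..1, s ^ 0 * deriv h (s * x) := by
      funext x
      rcases eq_or_ne x 0 with rfl | hx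
      · simp [hGdef]
      · rw [hGdef, dslope_of_ne h hx, slope_def_field]
        simp only [pow_zero, one_mul]
        rw [intervalIntegral.integral_comp_mul_right (deriv h) hx, zero_mul, one_mul,
          intervalIntegral.integral_deriv_eq_sub (fun y _ => hhd y) (hhd'.intervalIntegrable _ _),
          smul_eq_mul, sub_zero, div_eq_inv_mul]
    rw [hrep]
    exact contDiff_param _ (contDiff_infty_iff_deriv.mp hh).2 0
  have hGcont : Continuous G := hGc.continuous
  have hGt : ∀ t, t ≠ 0 → G t = (f t ^ cexp - 1)/t := by
    intro t ht
    rw [hGdef, dslope_of_ne h ht, slope_def_field, hh0, hhdef]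
    simp
  set F : ℝ → ℝ := fun r => ∫ t in (0:ℝ)..r, G t with hFdef
  have hInt : ∀ r, (∫ t in (0:ℝ)..r, (f t ^ cexp - 1)/t) = F r := by
    intro r
    apply intervalIntegral.integral_congr_ae
    rw [MeasureTheory.ae_iff]
    refine measure_mono_null (fun x hx => ?_) (measure_singleton (0:ℝ))
    simp only [Set.mem_setOf_eq] at hx
    by_contra hx0
    simp only [Set.mem_singleton_iff] at hx0
    exact hx fun _ => (hGt x hx0).symm
  have hη' : ∀ r, η r = r * Real.exp (F r) := fun r => by rw [hη r, hInt r]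
  have hFd : ∀ r, HasDerivAt F (G r) r := fun r =>
    intervalIntegral.integral_hasDerivAt_right (hGcont.intervalIntegrable _ _)
      (hGcont.stronglyMeasurableAtFilter _ _) hGcont.continuousAt
  have hFc : ContDiff ℝ (⊤ : ℕ∞) F := by
    have hdF : deriv F = G := funext fun r => (hFd r).deriv
    exact contDiff_infty_iff_deriv.mpr ⟨fun r => (hFd r).differentiableAt, hdF ▸ hGc⟩
  have hηfun : η = fun r => r * Real.exp (F r) := funext hη'
  have hηc : ContDiff ℝ (⊤ : ℕ∞) η := by
    rw [hηfun]
    exact contDiff_id.mul (Real.contDiff_exp.comp hFc)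
  have hkey : ∀ r, 1 + r * G r = f r ^ cexp := by
    intro r
    rcases eq_or_ne r 0 with rfl | hr
    · simp [hGdef, hf0]
    · rw [hGt r hr]; field_simp; ring
  have hηd : ∀ r, HasDerivAt η (Real.exp (F r) * f r ^ cexp) r := by
    intro r
    have h1 : HasDerivAt (fun r => r * Real.exp (F r))
        (1 * Real.exp (F r) + r * (Real.exp (F r) * G r)) r :=
      (hasDerivAt_id r).mul ((hFd r).exp)
    rw [hηfun]
    convert h1 using 1
    rw [← hkey r]; ring
  have hF0 : F 0 = 0 := by rw [hFdef]; exact intervalIntegral.integral_same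
  have hd0 : deriv η 0 = 1 := by
    rw [(hηd 0).deriv, hF0, hf0]
    simp
  have hodd : ∀ r, η (-r) = -η r := by
    intro r
    rw [hη (-r), hη r]
    have hoddg : ∀ t : ℝ, (f t ^ cexp - 1)/t = -((f (-t) ^ cexp - 1)/(-t)) := by
      intro t
      rw [hfeven t, div_neg]
      ring
    have hIeq : (∫ t in (0:ℝ)..(-r), (f t ^ cexp - 1)/t)
        = ∫ t in (0:ℝ)..r, (f t ^ cexp - 1)/t := by
      calc (∫ t in (0:ℝ)..(-r), (f t ^ cexp - 1)/t)
          = ∫ t in (0:ℝ)..(-r), -((f (-t) ^ cexp - 1)/(-t)) :=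
            intervalIntegral.integral_congr fun x _ => hoddg x
        _ = -∫ t in (0:ℝ)..(-r), (f (-t) ^ cexp - 1)/(-t) := intervalIntegral.integral_neg
        _ = -∫ t in (r:ℝ)..0, (f t ^ cexp - 1)/t := by
            rw [show (∫ t in (0:ℝ)..(-r), (f (-t) ^ cexp - 1)/(-t))
              = ∫ t in (-(-r):ℝ)..(-0:ℝ), (f t ^ cexp - 1)/t from
              intervalIntegral.integral_comp_neg fun t => (f t ^ cexp - 1)/t]
            norm_num
        _ = ∫ t in (0:ℝ)..r, (f t ^ cexp - 1)/t := by
            rw [intervalIntegral.integral_symm]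
            exact neg_neg _
    rw [hIeq]
    ring
  refine ⟨hηc, hodd, hd0, fun r hr => by rw [hη' r]; exact mul_pos hr (Real.exp_pos _), ?_⟩
  intro r _
  have hcast : ((m - 1 : ℕ) : ℝ) = (m:ℝ) - 1 := by
    have h1 : 1 ≤ m := by omega
    push_cast [h1]
    ring
  have hfr := hfpos r
  have hpow : (f r ^ cexp) ^ (m - 1) = (f r)⁻¹ := by
    rw [← Real.rpow_natCast (f r ^ cexp) (m - 1), ← Real.rpow_mul hfr.le, hcast]
    rw [show cexp * ((m:ℝ) - 1) = -1 by rw [hcexp]; field_simp; ring]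
    exact Real.rpow_neg_one _
  rw [hη' r, (hηd r).deriv, mul_pow, mul_pow, hpow]
  field_simp
end

section
/- Let α₁, α₂ : ℝ → ℝ be smooth even functions with α₁(0) = α₂(0) = 0. Then there exist δ > 0 and a function β : ℝ → ℝ that is smooth on (−δ, δ), even, satisfies β(0) = 1 and β(r) > 0 for all r ∈ (−δ, δ), and solves α₂(r) = log(β(r)) + α₁(r · β(r)) for all r ∈ (−δ, δ). Moreover β is locally unique: if δ' > 0 and β̃ : ℝ → ℝ is continuous on (−δ', δ') with β̃(0) = 1, β̃ > 0, and α₂(r) = log(β̃(r)) + α₁(r · β̃(r)) for all r ∈ (−δ', δ'), then β̃ agrees with β on a neighborhood of 0. -/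
open Filter Topology


private lemma deriv_even_zero {α : ℝ → ℝ} (hα : ContDiff ℝ (⊤ : ℕ∞) α)
    (he : ∀ r : ℝ, α (-r) = α r) : deriv α 0 = 0 := by
  have h : HasDerivAt α (deriv α 0) 0 := ((hα.differentiable (by simp)) 0).hasDerivAt
  have h0 : HasDerivAt α (deriv α 0) (-0 : ℝ) := by simpa using h
  have hneg : HasDerivAt (fun r : ℝ => α (-r)) (deriv α 0 * (-1)) 0 :=
    HasDerivAt.comp 0 h0 (hasDerivAt_neg 0)
  rw [funext he] at hneg
  have := h.unique hneg
  linarith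

/-- The implicit-function-theorem step in Lemma 2.3 of Gilkey–Park: local existence,
smoothness, evenness, positivity and local uniqueness of the solution `β` of
`α₂(r) = log β(r) + α₁(r β(r))` with `β(0) = 1`. -/
theorem stmt_4 (α₁ α₂ : ℝ → ℝ)
    (hα₁ : ContDiff ℝ (⊤ : ℕ∞) α₁) (hα₂ : ContDiff ℝ (⊤ : ℕ∞) α₂)
    (hα₁even : ∀ r : ℝ, α₁ (-r) = α₁ r) (hα₂even : ∀ r : ℝ, α₂ (-r) = α₂ r)
    (hα₁0 : α₁ 0 = 0) (hα₂0 : α₂ 0 = 0) :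
    ∃ δ > (0 : ℝ), ∃ β : ℝ → ℝ,
      ContDiffOn ℝ (⊤ : ℕ∞) β (Set.Ioo (-δ) δ) ∧
      (∀ r : ℝ, β (-r) = β r) ∧
      β 0 = 1 ∧
      (∀ r ∈ Set.Ioo (-δ) δ, 0 < β r) ∧
      (∀ r ∈ Set.Ioo (-δ) δ, α₂ r = Real.log (β r) + α₁ (r * β r)) ∧
      (∀ δ' > (0 : ℝ), ∀ β' : ℝ → ℝ,
        ContinuousOn β' (Set.Ioo (-δ') δ') → β' 0 = 1 →
        (∀ r ∈ Set.Ioo (-δ') δ', 0 < β' r) →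
        (∀ r ∈ Set.Ioo (-δ') δ', α₂ r = Real.log (β' r) + α₁ (r * β' r)) →
        ∃ ε > (0 : ℝ), ∀ r ∈ Set.Ioo (-ε) ε, β' r = β r) := by
  classical
  have hd1 : deriv α₁ 0 = 0 := deriv_even_zero hα₁ hα₁even
  have hd2 : deriv α₂ 0 = 0 := deriv_even_zero hα₂ hα₂even
  classical
  set G : ℝ × ℝ → ℝ := fun p => Real.log p.2 + α₁ (p.1 * p.2) - α₂ p.1 with hGdef
  set F : ℝ × ℝ → ℝ × ℝ := fun p => (p.1, G p) with hFdef
  have hF01 : F ((0:ℝ), (1:ℝ)) = ((0:ℝ), (0:ℝ)) := by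
    simp [hFdef, hGdef, hα₁0, hα₂0]
  have hGc : ContDiffAt ℝ (⊤ : ℕ∞) G ((0:ℝ), (1:ℝ)) := by
    refine ContDiffAt.sub (ContDiffAt.add ?_ ?_) ?_
    · exact (Real.contDiffAt_log.2 one_ne_zero).comp ((0:ℝ),(1:ℝ)) contDiff_snd.contDiffAt
    · exact hα₁.contDiffAt.comp ((0:ℝ),(1:ℝ)) (contDiff_fst.mul contDiff_snd).contDiffAt
    · exact hα₂.contDiffAt.comp ((0:ℝ),(1:ℝ)) contDiff_fst.contDiffAt
  have hFc : ContDiffAt ℝ (⊤ : ℕ∞) F ((0:ℝ), (1:ℝ)) := contDiff_fst.contDiffAt.prodMk hGc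
  have hlog : HasFDerivAt (fun p : ℝ × ℝ => Real.log p.2)
      (ContinuousLinearMap.snd ℝ ℝ ℝ) ((0:ℝ), (1:ℝ)) := by
    have h := (Real.hasDerivAt_log one_ne_zero).comp_hasFDerivAt ((0:ℝ), (1:ℝ)) (hasFDerivAt_snd (𝕜 := ℝ) (E := ℝ) (F := ℝ) (p := ((0:ℝ),(1:ℝ)))); simp [Function.comp] at h; exact h
  have hmul : HasFDerivAt (fun p : ℝ × ℝ => p.1 * p.2)
      (ContinuousLinearMap.fst ℝ ℝ ℝ) ((0:ℝ), (1:ℝ)) := by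
    have h := (hasFDerivAt_fst (p := ((0:ℝ), (1:ℝ)))).mul (hasFDerivAt_snd (𝕜 := ℝ) (E := ℝ) (F := ℝ) (p := ((0:ℝ),(1:ℝ)))); simp at h; exact h
  have hcomp1 : HasFDerivAt (fun p : ℝ × ℝ => α₁ (p.1 * p.2))
      (0 : ℝ × ℝ →L[ℝ] ℝ) ((0:ℝ), (1:ℝ)) := by
    have hα : HasDerivAt α₁ 0 ((0:ℝ) * (1:ℝ)) := by
      have := ((hα₁.differentiable (by simp)) 0).hasDerivAt
      rw [hd1] at this; simpa using this
    have h := hα.comp_hasFDerivAt ((0:ℝ), (1:ℝ)) hmul; simp [Function.comp] at h; exact h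
  have hcomp2 : HasFDerivAt (fun p : ℝ × ℝ => α₂ p.1)
      (0 : ℝ × ℝ →L[ℝ] ℝ) ((0:ℝ), (1:ℝ)) := by
    have hα : HasDerivAt α₂ 0 (((0:ℝ), (1:ℝ)).1) := by
      have := ((hα₂.differentiable (by simp)) 0).hasDerivAt
      rw [hd2] at this; exact this
    have h := hα.comp_hasFDerivAt ((0:ℝ), (1:ℝ)) (hasFDerivAt_fst (𝕜 := ℝ)); simp [Function.comp] at h; exact h
  have hGd : HasFDerivAt G (ContinuousLinearMap.snd ℝ ℝ ℝ) ((0:ℝ), (1:ℝ)) := by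
    have h := (hlog.add hcomp1).sub hcomp2; simp at h; exact h
  have hFd : HasFDerivAt F
      ((ContinuousLinearEquiv.refl ℝ (ℝ × ℝ)) : (ℝ × ℝ) →L[ℝ] (ℝ × ℝ)) ((0:ℝ), (1:ℝ)) := by
    have h := HasFDerivAt.prodMk (hasFDerivAt_fst (p := ((0:ℝ), (1:ℝ)))) hGd
    exact h.congr_fderiv (by ext <;> simp)
  -- local inverse
  have hn1 : ((⊤ : ℕ∞) : WithTop ℕ∞) ≠ 0 := by simp
  have hS : HasStrictFDerivAt F
      ((ContinuousLinearEquiv.refl ℝ (ℝ × ℝ)) : (ℝ × ℝ) →L[ℝ] (ℝ × ℝ)) ((0:ℝ), (1:ℝ)) :=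
    hFc.hasStrictFDerivAt' hFd hn1
  set e : OpenPartialHomeomorph (ℝ × ℝ) (ℝ × ℝ) := HasStrictFDerivAt.toOpenPartialHomeomorph F hS with hedef
  set g : ℝ × ℝ → ℝ × ℝ := ⇑e.symm with hgdef
  have hsource : ((0:ℝ), (1:ℝ)) ∈ e.source := HasStrictFDerivAt.mem_toOpenPartialHomeomorph_source hS
  have htarget : ((0:ℝ), (0:ℝ)) ∈ e.target := by
    have := HasStrictFDerivAt.image_mem_toOpenPartialHomeomorph_target hS
    rwa [hF01] at this
  have hcoe : (e : ℝ × ℝ → ℝ × ℝ) = F := rfl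
  have hg00 : g ((0:ℝ), (0:ℝ)) = ((0:ℝ), (1:ℝ)) := by
    have h := e.left_inv hsource
    rw [hcoe, hF01] at h
    exact h
  have hgc : ContDiffAt ℝ (⊤ : ℕ∞) g ((0:ℝ), (0:ℝ)) := by
    have h := hFc.to_localInverse (f' := ContinuousLinearEquiv.refl ℝ (ℝ × ℝ)) hFd hn1
    rw [hF01] at h
    exact h
  obtain ⟨u, hu_mem, hgu⟩ : ∃ u ∈ 𝓝 (((0:ℝ), (0:ℝ)) : ℝ × ℝ), ContDiffOn ℝ (⊤ : ℕ∞) g u := by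
    set W : Set (ℝ × ℝ) := {p | 0 < p.2} with hWdef
    have hWo : IsOpen W := isOpen_lt continuous_const continuous_snd
    have hFW : ContDiffOn ℝ (⊤ : ℕ∞) F W := by
      refine contDiffOn_fst.prodMk (ContDiffOn.sub (ContDiffOn.add ?_ ?_) ?_)
      · exact Real.contDiffOn_log.comp contDiffOn_snd
          (fun p (hp : 0 < p.2) => (ne_of_gt hp : p.2 ≠ 0))
      · exact (hα₁.comp (contDiff_fst.mul contDiff_snd)).contDiffOn
      · exact (hα₂.comp contDiff_fst).contDiffOn
    have hW1 : ((0:ℝ), (1:ℝ)) ∈ W := by show (0:ℝ) < 1; norm_num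
    have hfdc : ContinuousOn (fderiv ℝ F) W :=
      hFW.continuousOn_fderiv_of_isOpen hWo (by exact_mod_cast le_top)
    have hfd01 : fderiv ℝ F ((0:ℝ), (1:ℝ)) ∈
        Set.range ((↑) : ((ℝ × ℝ) ≃L[ℝ] (ℝ × ℝ)) → (ℝ × ℝ) →L[ℝ] (ℝ × ℝ)) :=
      ⟨_, hFd.fderiv.symm⟩
    have hN : W ∩ fderiv ℝ F ⁻¹' Set.range
        ((↑) : ((ℝ × ℝ) ≃L[ℝ] (ℝ × ℝ)) → (ℝ × ℝ) →L[ℝ] (ℝ × ℝ)) ∈ 𝓝 ((0:ℝ), (1:ℝ)) :=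
      inter_mem (hWo.mem_nhds hW1)
        ((hfdc.continuousAt (hWo.mem_nhds hW1)).preimage_mem_nhds
          (ContinuousLinearEquiv.isOpen.mem_nhds hfd01))
    have hgN : g ⁻¹' (W ∩ fderiv ℝ F ⁻¹' Set.range
        ((↑) : ((ℝ × ℝ) ≃L[ℝ] (ℝ × ℝ)) → (ℝ × ℝ) →L[ℝ] (ℝ × ℝ))) ∈ 𝓝 ((0:ℝ), (0:ℝ)) := by
      rw [← hg00] at hN
      exact hgc.continuousAt.preimage_mem_nhds hN
    refine ⟨e.target ∩ g ⁻¹' (W ∩ fderiv ℝ F ⁻¹' Set.range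
        ((↑) : ((ℝ × ℝ) ≃L[ℝ] (ℝ × ℝ)) → (ℝ × ℝ) →L[ℝ] (ℝ × ℝ))),
      inter_mem (e.open_target.mem_nhds htarget) hgN, ?_⟩
    intro y hy
    obtain ⟨hyt, hyW, ⟨f₀, hf₀⟩⟩ := hy
    have hFat : ContDiffAt ℝ (⊤ : ℕ∞) F (g y) := hFW.contDiffAt (hWo.mem_nhds hyW)
    have hFder : HasFDerivAt F (f₀ : (ℝ × ℝ) →L[ℝ] (ℝ × ℝ)) (g y) := by
      rw [hf₀]
      exact (hFat.differentiableAt (by simp)).hasFDerivAt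
    exact (e.contDiffAt_symm (f₀' := f₀) hyt hFder hFat).contDiffWithinAt
  have hgcont : ContinuousAt g ((0:ℝ), (0:ℝ)) := hgc.continuousAt
  have hpos_mem : {y : ℝ × ℝ | 0 < (g y).2} ∈ 𝓝 (((0:ℝ), (0:ℝ)) : ℝ × ℝ) := by
    have hc : ContinuousAt (fun y : ℝ × ℝ => (g y).2) ((0:ℝ), (0:ℝ)) :=
      continuous_snd.continuousAt.comp hgcont
    have : (0:ℝ) < (g ((0:ℝ), (0:ℝ))).2 := by rw [hg00]; norm_num
    exact hc.preimage_mem_nhds (isOpen_Ioi.mem_nhds this)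
  have hV_mem : u ∩ e.target ∩ {y : ℝ × ℝ | 0 < (g y).2} ∈ 𝓝 (((0:ℝ), (0:ℝ)) : ℝ × ℝ) :=
    inter_mem (inter_mem hu_mem (e.open_target.mem_nhds htarget)) hpos_mem
  obtain ⟨δ₀, hδ₀pos, hball⟩ := Metric.mem_nhds_iff.1 hV_mem
  have hkey : ∀ r ∈ Set.Ioo (-δ₀) δ₀,
      ((r, (0:ℝ)) : ℝ × ℝ) ∈ u ∩ e.target ∩ {y : ℝ × ℝ | 0 < (g y).2} := by
    intro r hr
    apply hball
    have : dist ((r, (0:ℝ)) : ℝ × ℝ) ((0:ℝ), (0:ℝ)) = |r| := by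
      simp [Prod.dist_eq, Real.dist_eq, abs_nonneg]
    rw [Metric.mem_ball, this, abs_lt]
    exact ⟨hr.1, hr.2⟩
  set β₁ : ℝ → ℝ := fun r => (g (r, 0)).2 with hβ₁def
  have hβ₁0 : β₁ 0 = 1 := by show (g ((0:ℝ), (0:ℝ))).2 = 1; rw [hg00]
  have hFg : ∀ r ∈ Set.Ioo (-δ₀) δ₀, F (g (r, 0)) = (r, 0) := by
    intro r hr
    have h := e.right_inv (hkey r hr).1.2
    rwa [hcoe] at h
  have hgr : ∀ r ∈ Set.Ioo (-δ₀) δ₀, g (r, 0) = (r, β₁ r) := by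
    intro r hr
    have h1 : (F (g (r, 0))).1 = r := by rw [hFg r hr]
    have h1' : (g (r, 0)).1 = r := h1
    exact Prod.ext h1' rfl
  have hβ₁pos : ∀ r ∈ Set.Ioo (-δ₀) δ₀, 0 < β₁ r := fun r hr => (hkey r hr).2
  have hβ₁eq : ∀ r ∈ Set.Ioo (-δ₀) δ₀, α₂ r = Real.log (β₁ r) + α₁ (r * β₁ r) := by
    intro r hr
    have h2 : (F (g (r, 0))).2 = 0 := by rw [hFg r hr]
    rw [hgr r hr] at h2
    have h3 : Real.log (β₁ r) + α₁ (r * β₁ r) - α₂ r = 0 := h2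
    linarith
  have hβ₁smooth : ContDiffOn ℝ (⊤ : ℕ∞) β₁ (Set.Ioo (-δ₀) δ₀) := by
    have h1 : ContDiffOn ℝ (⊤ : ℕ∞) (fun r : ℝ => g (r, 0)) (Set.Ioo (-δ₀) δ₀) :=
      hgu.comp ((contDiff_id.prodMk contDiff_const).contDiffOn)
        (fun r hr => (hkey r hr).1.1)
    exact contDiff_snd.comp_contDiffOn h1
  have hsrcg : ∀ r ∈ Set.Ioo (-δ₀) δ₀, ((r, β₁ r) : ℝ × ℝ) ∈ e.source := by
    intro r hr
    rw [← hgr r hr]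
    exact e.map_target (hkey r hr).1.2
  have huniq : ∀ δ' > (0:ℝ), ∀ β' : ℝ → ℝ, ContinuousOn β' (Set.Ioo (-δ') δ') → β' 0 = 1 →
      (∀ r ∈ Set.Ioo (-δ') δ', 0 < β' r) →
      (∀ r ∈ Set.Ioo (-δ') δ', α₂ r = Real.log (β' r) + α₁ (r * β' r)) →
      ∃ ε > (0:ℝ), ∀ r ∈ Set.Ioo (-ε) ε, β' r = β₁ r := by
    intro δ' hδ' β' hβ'cont hβ'0 hβ'pos hβ'eq
    have hβ'at : ContinuousAt β' 0 :=
      hβ'cont.continuousAt (Ioo_mem_nhds (by linarith) hδ')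
    have hmapc : ContinuousAt (fun r : ℝ => ((r, β' r) : ℝ × ℝ)) 0 :=
      continuousAt_id.prodMk hβ'at
    have hsrc' : ∀ᶠ r in 𝓝 (0:ℝ), ((r, β' r) : ℝ × ℝ) ∈ e.source := by
      apply hmapc.eventually_mem
      have hpt : (((0:ℝ), β' 0) : ℝ × ℝ) = ((0:ℝ), (1:ℝ)) := by rw [hβ'0]
      show e.source ∈ 𝓝 (((0:ℝ), β' 0) : ℝ × ℝ)
      rw [hpt]
      exact e.open_source.mem_nhds hsource
    have hIoo' : ∀ᶠ r in 𝓝 (0:ℝ), r ∈ Set.Ioo (-δ') δ' :=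
      Ioo_mem_nhds (by linarith) hδ'
    have hIoo0 : ∀ᶠ r in 𝓝 (0:ℝ), r ∈ Set.Ioo (-δ₀) δ₀ :=
      Ioo_mem_nhds (by linarith) hδ₀pos
    have hall := (hsrc'.and hIoo').and hIoo0
    rw [Metric.eventually_nhds_iff_ball] at hall
    obtain ⟨ε, hεpos, hε⟩ := hall
    refine ⟨ε, hεpos, ?_⟩
    intro r hr
    have hrball : r ∈ Metric.ball (0:ℝ) ε := by
      rw [Metric.mem_ball, Real.dist_eq, sub_zero, abs_lt]
      exact ⟨hr.1, hr.2⟩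
    obtain ⟨⟨h1, h2⟩, h3⟩ := hε r hrball
    have hG' : G (r, β' r) = 0 := by
      have h := hβ'eq r h2
      show Real.log (β' r) + α₁ (r * β' r) - α₂ r = 0
      linarith
    have hf1 : F (r, β' r) = ((r, (0:ℝ)) : ℝ × ℝ) := by
      show ((r, G (r, β' r)) : ℝ × ℝ) = (r, 0)
      rw [hG']
    have hf2 : F (r, β₁ r) = ((r, (0:ℝ)) : ℝ × ℝ) := by
      rw [← hgr r h3]
      exact hFg r h3
    have hinj := e.injOn h1 (hsrcg r h3)
      (show (e : ℝ × ℝ → ℝ × ℝ) (r, β' r) = (e : ℝ × ℝ → ℝ × ℝ) (r, β₁ r) by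
        rw [hcoe, hf1, hf2])
    exact (Prod.ext_iff.1 hinj).2
  -- evenness of β₁ near 0
  have hmaps : ∀ r ∈ Set.Ioo (-δ₀) δ₀, -r ∈ Set.Ioo (-δ₀) δ₀ := by
    intro r hr
    exact ⟨by linarith [hr.2], by linarith [hr.1]⟩
  obtain ⟨ε₁, hε₁pos, heven₁⟩ := huniq δ₀ hδ₀pos (fun r => β₁ (-r))
    (hβ₁smooth.continuousOn.comp continuous_neg.continuousOn hmaps)
    (by show β₁ (-0) = 1; rw [neg_zero]; exact hβ₁0)
    (fun r hr => hβ₁pos (-r) (hmaps r hr))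
    (by
      intro r hr
      have h := hβ₁eq (-r) (hmaps r hr)
      rw [hα₂even r] at h
      have h2 : α₁ (-r * β₁ (-r)) = α₁ (r * β₁ (-r)) := by
        rw [neg_mul]; exact hα₁even _
      rw [h2] at h
      exact h)
  -- final packaging
  have hδfpos : (0:ℝ) < min δ₀ ε₁ := lt_min hδ₀pos hε₁pos
  have hsub : Set.Ioo (-(min δ₀ ε₁)) (min δ₀ ε₁) ⊆ Set.Ioo (-δ₀) δ₀ :=
    Set.Ioo_subset_Ioo (neg_le_neg (min_le_left _ _)) (min_le_left _ _)
  refine ⟨min δ₀ ε₁, hδfpos, fun r => if |r| < min δ₀ ε₁ then β₁ r else 1,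
    ?_, ?_, ?_, ?_, ?_, ?_⟩
  · exact (hβ₁smooth.mono hsub).congr
      (fun r hr => if_pos (abs_lt.2 ⟨hr.1, hr.2⟩))
  · intro r
    by_cases h : |r| < min δ₀ ε₁
    · have h' : |(-r)| < min δ₀ ε₁ := by rwa [abs_neg]
      show (if |(-r)| < min δ₀ ε₁ then β₁ (-r) else 1) =
        (if |r| < min δ₀ ε₁ then β₁ r else 1)
      rw [if_pos h', if_pos h]
      exact heven₁ r (abs_lt.1 (lt_of_lt_of_le h (min_le_right _ _)))
    · have h' : ¬ |(-r)| < min δ₀ ε₁ := by rwa [abs_neg]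
      show (if |(-r)| < min δ₀ ε₁ then β₁ (-r) else 1) =
        (if |r| < min δ₀ ε₁ then β₁ r else 1)
      rw [if_neg h', if_neg h]
  · show (if |(0:ℝ)| < min δ₀ ε₁ then β₁ 0 else 1) = 1
    rw [if_pos (by rwa [abs_zero])]
    exact hβ₁0
  · intro r hr
    show (0:ℝ) < (if |r| < min δ₀ ε₁ then β₁ r else 1)
    rw [if_pos (abs_lt.2 ⟨hr.1, hr.2⟩)]
    exact hβ₁pos r (hsub hr)
  · intro r hr
    show α₂ r = Real.log (if |r| < min δ₀ ε₁ then β₁ r else 1) +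
      α₁ (r * (if |r| < min δ₀ ε₁ then β₁ r else 1))
    rw [if_pos (abs_lt.2 ⟨hr.1, hr.2⟩)]
    exact hβ₁eq r (hsub hr)
  · intro δ' hδ' β' h1 h2 h3 h4
    obtain ⟨ε, hεpos, hagree⟩ := huniq δ' hδ' β' h1 h2 h3 h4
    refine ⟨min ε (min δ₀ ε₁), lt_min hεpos hδfpos, ?_⟩
    intro r hr
    have hr1 : r ∈ Set.Ioo (-ε) ε :=
      ⟨by have := hr.1; have := min_le_left ε (min δ₀ ε₁); linarith,
       lt_of_lt_of_le hr.2 (min_le_left _ _)⟩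
    have hr2 : |r| < min δ₀ ε₁ := by
      rw [abs_lt]
      constructor
      · have := hr.1; have := min_le_right ε (min δ₀ ε₁); linarith
      · exact lt_of_lt_of_le hr.2 (min_le_right _ _)
    show β' r = (if |r| < min δ₀ ε₁ then β₁ r else 1)
    rw [if_pos hr2]
    exact hagree r hr1
end

section
/- Let η : ℝ → ℝ be defined for 0 < r < π/2 by η(r) = c₁ · (1 − cos(r)^(2/3))^(1/2) · (cos(r)^(2/3) + cos(r)^(4/3) + 1)^(−1/4) · exp(−(√3/2) · arctan((2·cos(r)^(2/3) + 1)/√3)), where c₁ = 3^(3/4) · e^(π/(2√3)). Then η is differentiable at every r ∈ (0, π/2), with derivative η'(r) = η(r)/(sin(r) · cos(r)^(1/3)); in particular η'(r)³ · sin(r)³ · cos(r) = η(r)³ for all r ∈ (0, π/2). -/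
/-- The constant `c₁ = 3^(3/4) e^(π/(2√3))` of Lemma 2.4 of Gilkey–Park. -/
noncomputable def c₁ : ℝ := (3 : ℝ) ^ ((3 : ℝ) / 4) * Real.exp (Real.pi / (2 * Real.sqrt 3))

/-- The reparametrized radial distance function `η` of Lemma 2.4 of Gilkey–Park on `CP²`. -/
noncomputable def η (r : ℝ) : ℝ :=
  c₁ * (1 - Real.cos r ^ ((2 : ℝ) / 3)) ^ ((1 : ℝ) / 2)
    * (Real.cos r ^ ((2 : ℝ) / 3) + Real.cos r ^ ((4 : ℝ) / 3) + 1) ^ (-(1 : ℝ) / 4)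
    * Real.exp (-(Real.sqrt 3 / 2)
        * Real.arctan ((2 * Real.cos r ^ ((2 : ℝ) / 3) + 1) / Real.sqrt 3))

/-! In the variable `t = cos(r)^(1/3)` all fractional powers of `cos r` become polynomials in `t`,
and the logarithmic derivatives of the three factors of `η` add up to `-3t/(1 - t⁶)`.
Since `dt/dr = -sin r/(3t²)` and `1 - t⁶ = sin² r`, the logarithmic derivative of `η` in `r` is
`1/(t sin r) = 1/(sin r · cos(r)^(1/3))`. -/

open Real

/-- `η` in the variable `t = cos(r)^(1/3)`. -/
noncomputable def ηProfile (t : ℝ) : ℝ :=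
  c₁ * (1 - t ^ 2) ^ ((1 : ℝ) / 2) * (t ^ 2 + t ^ 4 + 1) ^ (-(1 : ℝ) / 4)
    * exp (-(√3 / 2) * arctan ((2 * t ^ 2 + 1) / √3))

lemma rpow_div_three_eq_pow {x : ℝ} (hx : 0 ≤ x) (n : ℕ) :
    x ^ ((n : ℝ) / 3) = (x ^ ((1 : ℝ) / 3)) ^ n := by
  rw [← rpow_mul_natCast hx, one_div_mul_eq_div]

lemma rpow_one_third_pow_three {x : ℝ} (hx : 0 ≤ x) : (x ^ ((1 : ℝ) / 3)) ^ 3 = x := by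
  rw [← rpow_div_three_eq_pow hx]
  norm_num

lemma η_eq_ηProfile {r : ℝ} (hr : 0 ≤ cos r) : η r = ηProfile (cos r ^ ((1 : ℝ) / 3)) := by
  simp only [η, ηProfile, ← rpow_div_three_eq_pow hr]
  norm_num

lemma HasDerivAt.rpow_const_of_pos {f : ℝ → ℝ} {f' x : ℝ} (p : ℝ) (hf : HasDerivAt f f' x)
    (hx : 0 < f x) : HasDerivAt (fun y => f y ^ p) (f x ^ p * (p * f' / f x)) x := by
  convert hf.rpow_const (p := p) (Or.inl hx.ne') using 1
  rw [rpow_sub_one hx.ne']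
  ring

lemma hasDerivAt_ηProfile {t : ℝ} (ht : t ^ 2 < 1) :
    HasDerivAt ηProfile (ηProfile t * (-3 * t / (1 - t ^ 6))) t := by
  have hQ : 0 < t ^ 2 + t ^ 4 + 1 := by positivity
  have hsq : HasDerivAt (fun y : ℝ => y ^ 2) (2 * t) t := by
    simpa using hasDerivAt_pow 2 t
  have hA := ((hsq.const_sub 1).rpow_const_of_pos ((1 : ℝ) / 2) (by linarith)).const_mul c₁
  have hq : HasDerivAt (fun y : ℝ => y ^ 2 + y ^ 4 + 1) (2 * t + 4 * t ^ 3) t := by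
    simpa using ((hasDerivAt_pow 2 t).add (hasDerivAt_pow 4 t)).add_const 1
  have hB := hq.rpow_const_of_pos (-(1 : ℝ) / 4) hQ
  have hE := ((((hsq.const_mul 2).add_const 1).div_const √3).arctan.const_mul (-(√3 / 2))).exp
  refine ((hA.mul hB).mul hE).congr_deriv ?_
  have h3 : √3 ^ 2 = 3 := sq_sqrt (by norm_num)
  have h1 : 1 - t ^ 2 ≠ 0 := by linarith
  have h6 : 1 - t ^ 6 = (1 - t ^ 2) * (t ^ 2 + t ^ 4 + 1) := by ring
  simp only [ηProfile, Pi.mul_apply, h6, div_pow, h3]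
  field_simp
  ring

lemma hasDerivAt_cos_rpow_one_third {r : ℝ} (hr : 0 < cos r) :
    HasDerivAt (fun r => cos r ^ ((1 : ℝ) / 3))
      (-sin r / (3 * (cos r ^ ((1 : ℝ) / 3)) ^ 2)) r := by
  convert (hasDerivAt_cos r).rpow_const_of_pos ((1 : ℝ) / 3) hr using 1
  have ht0 : 0 < cos r ^ ((1 : ℝ) / 3) := rpow_pos_of_pos hr _
  nth_rw 3 [← rpow_one_third_pow_three hr.le]
  field_simp

lemma hasDerivAt_η {r : ℝ} (hr : r ∈ Set.Ioo 0 (π / 2)) :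
    HasDerivAt η (η r / (sin r * cos r ^ ((1 : ℝ) / 3))) r := by
  have hc : 0 < cos r := cos_pos_of_mem_Ioo ⟨by linarith [hr.1, pi_pos], hr.2⟩
  have hs : 0 < sin r := sin_pos_of_pos_of_lt_pi hr.1 (by linarith [hr.2, pi_pos])
  set t := cos r ^ ((1 : ℝ) / 3)
  have ht0 : 0 < t := rpow_pos_of_pos hc _
  have hsin : sin r ^ 2 = 1 - t ^ 6 := by
    rw [show t ^ 6 = (t ^ 3) ^ 2 by ring, rpow_one_third_pow_three hc.le]
    linarith [sin_sq_add_cos_sq r]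
  have ht1 : t ^ 2 < 1 := by
    have ht6 : (t ^ 2) ^ 3 < 1 := by nlinarith [pow_pos hs 2]
    exact (pow_lt_one_iff_of_nonneg (by positivity) (by norm_num)).mp ht6
  have hloc : ηProfile ∘ (fun r => cos r ^ ((1 : ℝ) / 3)) =ᶠ[nhds r] η := by
    filter_upwards [continuous_cos.continuousAt.eventually (lt_mem_nhds hc)] with y hy
    exact (η_eq_ηProfile hy.le).symm
  refine (((hasDerivAt_ηProfile ht1).comp r (hasDerivAt_cos_rpow_one_third hc)).congr_of_eventuallyEq
    hloc.symm).congr_deriv ?_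
  rw [η_eq_ηProfile hc.le, ← hsin]
  field_simp
  ring

/-- On `(0, π/2)`, `η` is differentiable with `η' = η/(sin r · cos(r)^(1/3))`; in particular
`η'³ sin³(r) cos(r) = η³`, the ODE `1 = η'³ η^(−3) sin³(r) cos(r)` of Lemma 2.4. -/
theorem stmt_8 :
    ∀ r ∈ Set.Ioo (0 : ℝ) (Real.pi / 2),
      HasDerivAt η (η r / (Real.sin r * Real.cos r ^ ((1 : ℝ) / 3))) r ∧
      (deriv η r) ^ 3 * (Real.sin r) ^ 3 * Real.cos r = (η r) ^ 3 := by
  intro r hr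
  have hc : 0 < cos r := cos_pos_of_mem_Ioo ⟨by linarith [hr.1, pi_pos], hr.2⟩
  have hs : 0 < sin r := sin_pos_of_pos_of_lt_pi hr.1 (by linarith [hr.2, pi_pos])
  refine ⟨hasDerivAt_η hr, ?_⟩
  rw [(hasDerivAt_η hr).deriv, div_pow, mul_pow, rpow_one_third_pow_three hc.le]
  field_simp
end

section
/- Let η : ℝ → ℝ be defined for 0 < r < π/2 by η(r) = c₁ · (1 − cos(r)^(2/3))^(1/2) · (cos(r)^(2/3) + cos(r)^(4/3) + 1)^(−1/4) · exp(−(√3/2) · arctan((2·cos(r)^(2/3) + 1)/√3)), where c₁ = 3^(3/4) · e^(π/(2√3)). Then η(r) → 3^(3/4) · e^(π/(4√3)) as r → (π/2)⁻, and the derivative η' is integrable on the interval (0, π/2). -/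
/-!
Writing `η = etaOfCos ∘ cos`, every factor of `etaOfCos` is a nonnegative antitone function of
`c ∈ [0, 1]`, so `η` is monotone on `[0, π/2]`, and the derivative of a monotone function is
integrable by Lebesgue's differentiation theorem. The limit is `etaOfCos 0`, by continuity at `0`,
evaluated with `arctan (1/√3) = π/6`.
-/

open Real Set

noncomputable def etaOfCos (c : ℝ) : ℝ :=
  c₁ * (1 - c ^ ((2 : ℝ) / 3)) ^ ((1 : ℝ) / 2)
    * (c ^ ((2 : ℝ) / 3) + c ^ ((4 : ℝ) / 3) + 1) ^ (-(1 : ℝ) / 4)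
    * exp (-(√3 / 2) * arctan ((2 * c ^ ((2 : ℝ) / 3) + 1) / √3))

theorem c₁_pos : 0 < c₁ := by unfold c₁; positivity

theorem antitoneOn_etaOfCos : AntitoneOn etaOfCos (Icc 0 1) := by
  rintro x ⟨hx0, -⟩ y ⟨hy0, hy1⟩ hxy
  have hxy23 : x ^ ((2 : ℝ) / 3) ≤ y ^ ((2 : ℝ) / 3) := by gcongr
  have hy23 : y ^ ((2 : ℝ) / 3) ≤ 1 := rpow_le_one hy0 hy1 (by norm_num)
  have hx_root : 0 ≤ (1 - x ^ ((2 : ℝ) / 3)) ^ ((1 : ℝ) / 2) := rpow_nonneg (by linarith) _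
  unfold etaOfCos
  gcongr ?_ * ?_ * ?_
  · exact mul_nonneg (mul_nonneg c₁_pos.le hx_root) (by positivity)
  · exact mul_nonneg c₁_pos.le hx_root
  · gcongr
    exact c₁_pos.le
  · exact rpow_le_rpow_of_nonpos (by positivity) (by gcongr) (by norm_num)
  · rw [exp_le_exp, neg_mul, neg_mul, neg_le_neg_iff]
    gcongr

theorem continuousAt_etaOfCos {c : ℝ} (hc : 0 ≤ c) : ContinuousAt etaOfCos c := by
  unfold etaOfCos
  fun_prop (disch := first | (left; positivity) | (right; norm_num))

theorem etaOfCos_zero : etaOfCos 0 = 3 ^ ((3 : ℝ) / 4) * exp (π / (4 * √3)) := by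
  have harctan : arctan (1 / √3) = π / 6 := by
    rw [← tan_pi_div_six, arctan_tan] <;> linarith [pi_pos]
  have hsqrt : √3 * √3 = 3 := mul_self_sqrt (by norm_num)
  unfold etaOfCos c₁
  rw [zero_rpow (by norm_num), zero_rpow (by norm_num)]
  simp only [sub_zero, mul_zero, zero_add, add_zero, one_rpow, mul_one, harctan]
  rw [mul_assoc, ← exp_add]
  congr 2
  field_simp
  linear_combination (-4) * hsqrt

-- `η = etaOfCos ∘ cos` holds by `rfl`.
theorem monotoneOn_eta : MonotoneOn η (Icc 0 (π / 2)) :=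
  antitoneOn_etaOfCos.comp (antitoneOn_cos.mono (Icc_subset_Icc_right (by linarith [pi_pos])))
    fun _ hr => ⟨cos_nonneg_of_mem_Icc ⟨by linarith [hr.1, pi_pos], hr.2⟩, cos_le_one _⟩

/-- `η(r) → 3^(3/4) e^(π/(4√3))` as `r → (π/2)⁻`, and `ψ = η'` is integrable on `(0, π/2)`:
the geodesic incompleteness remark of Gilkey–Park. -/
theorem stmt_11 :
    Filter.Tendsto η (nhdsWithin (Real.pi / 2) (Set.Iio (Real.pi / 2)))
      (nhds ((3 : ℝ) ^ ((3 : ℝ) / 4) * Real.exp (Real.pi / (4 * Real.sqrt 3)))) ∧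
    MeasureTheory.IntegrableOn (deriv η) (Set.Ioo 0 (Real.pi / 2)) := by
  constructor
  · have hcont : ContinuousAt η (π / 2) :=
      (continuousAt_etaOfCos (cos_pi_div_two ▸ le_rfl)).comp continuous_cos.continuousAt
    rw [← etaOfCos_zero, ← cos_pi_div_two]
    exact hcont.continuousWithinAt.tendsto
  · have hmono : MonotoneOn η (uIcc 0 (π / 2)) :=
      uIcc_of_le (by positivity : (0 : ℝ) ≤ π / 2) ▸ monotoneOn_eta
    exact hmono.intervalIntegrable_deriv.1.mono_set Ioo_subset_Ioc_self
end

section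
/- Let η : ℝ → ℝ be defined for 0 < r < π/2 by η(r) = c₁ · (1 − cos(r)^(2/3))^(1/2) · (cos(r)^(2/3) + cos(r)^(4/3) + 1)^(−1/4) · exp(−(√3/2) · arctan((2·cos(r)^(2/3) + 1)/√3)), where c₁ = 3^(3/4) · e^(π/(2√3)). Then as r → 0⁺ one has η'(r) − (1 + r²/2 + 13r⁴/72 + 1177r⁶/19440 + 7369r⁸/362880 + 681907r¹⁰/97977600) = O(r¹²). -/
open Real Filter Topology Asymptotics Set

section PowerScale

variable {𝕜 : Type*} [NormedField 𝕜]

theorem isBigO_pow_pow_of_le {n k : ℕ} (hnk : n ≤ k) :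
    (fun x : 𝕜 => x ^ k) =O[𝓝 0] (· ^ n) := by
  obtain ⟨m, rfl⟩ := Nat.exists_eq_add_of_le hnk
  have : (fun x : 𝕜 => x ^ m) =O[𝓝 0] (fun _ => (1 : 𝕜)) :=
    ((continuous_pow m).continuousAt (x := 0)).isBigO_one 𝕜
  simpa [pow_add] using (isBigO_refl (fun x : 𝕜 => x ^ n) (𝓝 0)).mul this

theorem isBigO_pow_mul_const {n k : ℕ} (hnk : n ≤ k) (c : 𝕜) :
    (fun x : 𝕜 => x ^ k * c) =O[𝓝 0] (· ^ n) :=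
  ((isBigO_pow_pow_of_le hnk).const_mul_left c).congr_left fun _ => mul_comm _ _

end PowerScale

theorem isBigO_sub_pow_succ_of_hasDerivAt {E : Type*} [NormedAddCommGroup E] [NormedSpace ℝ E]
    {f f' : ℝ → E} {x₀ : ℝ} {n : ℕ}
    (hf : ∀ᶠ x in 𝓝 x₀, HasDerivAt f (f' x) x) (hf' : f' =O[𝓝 x₀] fun x => (x - x₀) ^ n) :
    (fun x => f x - f x₀) =O[𝓝 x₀] fun x => (x - x₀) ^ (n + 1) := by
  obtain ⟨C, hC₀, hC⟩ := hf'.exists_pos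
  obtain ⟨ε, hε, hball⟩ := Metric.eventually_nhds_iff_ball.1 (hf.and hC.bound)
  refine IsBigO.of_bound C ?_
  filter_upwards [Metric.ball_mem_nhds x₀ hε] with x hx
  have hsub : Metric.closedBall x₀ |x - x₀| ⊆ Metric.ball x₀ ε :=
    Metric.closedBall_subset_ball (by simpa [Real.dist_eq] using hx)
  have hbound : ∀ y ∈ Metric.closedBall x₀ |x - x₀|, ‖f' y‖ ≤ C * |x - x₀| ^ n := by
    intro y hy
    refine (hball y (hsub hy)).2.trans ?_
    rw [norm_pow, Real.norm_eq_abs]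
    exact mul_le_mul_of_nonneg_left
      (pow_le_pow_left₀ (abs_nonneg _) (by simpa [Real.dist_eq] using hy) n) hC₀.le
  have := (convex_closedBall x₀ |x - x₀|).norm_image_sub_le_of_norm_hasDerivWithin_le
    (fun y hy => (hball y (hsub hy)).1.hasDerivWithinAt) hbound
    (Metric.mem_closedBall_self (abs_nonneg _)) (y := x) (by simp [Real.dist_eq])
  simpa [norm_pow, pow_succ, mul_assoc] using this

theorem isBigO_sub_pow_succ_of_hasDerivAt_mul_self {y p g p' : ℝ → ℝ} {x₀ : ℝ} {n : ℕ}
    (hy : ∀ᶠ x in 𝓝 x₀, HasDerivAt y (g x * y x) x)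
    (hp : ∀ᶠ x in 𝓝 x₀, HasDerivAt p (p' x) x) (hyp : y x₀ = p x₀) (hy₀ : y x₀ ≠ 0)
    (hres : (fun x => g x * p x - p' x) =O[𝓝 x₀] fun x => (x - x₀) ^ n) :
    (fun x => y x - p x) =O[𝓝 x₀] fun x => (x - x₀) ^ (n + 1) := by
  have hcont : ContinuousAt y x₀ := hy.self_of_nhds.continuousAt
  have hne : ∀ᶠ x in 𝓝 x₀, y x ≠ 0 := hcont.eventually_ne hy₀
  -- `y' = g y` turns the derivative of `(y - p) / y` into `(g p - p') / y`.
  have hquot : ∀ᶠ x in 𝓝 x₀,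
      HasDerivAt (fun x => (y x - p x) / y x) ((g x * p x - p' x) * (y x)⁻¹) x := by
    filter_upwards [hy, hp, hne] with x hyx hpx hx
    exact ((hyx.sub hpx).div hyx hx).congr_deriv (by simp only [Pi.sub_apply]; field_simp; ring)
  have hquotO := isBigO_sub_pow_succ_of_hasDerivAt hquot
    (hres.mul ((hcont.inv₀ hy₀).isBigO_one ℝ) |>.congr_right fun _ => mul_one _)
  simp only [hyp, sub_self, zero_div, sub_zero] at hquotO
  refine (hquotO.mul (hcont.isBigO_one ℝ)).congr' ?_ (by simp)
  filter_upwards [hne] with x hx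
  field_simp

theorem isBigO_comp_sub_of_isBigO_sub {φ P f p q : ℝ → ℝ} {k m : ℕ} (hk : 0 < k) (hm : 0 < m)
    (hφ : (fun x => φ x - P x) =O[𝓝 0] (· ^ m)) (hP : ContDiffAt ℝ 1 P 0)
    (hp : p =O[𝓝 0] (· ^ k)) (hfp : (fun x => f x - p x) =O[𝓝 0] (· ^ (k * m)))
    (hPp : (fun x => P (p x) - q x) =O[𝓝 0] (· ^ (k * m))) :
    (fun x => φ (f x) - q x) =O[𝓝 0] (· ^ (k * m)) := by
  have hf : f =O[𝓝 0] (· ^ k) :=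
    ((hfp.trans (isBigO_pow_pow_of_le (Nat.le_mul_of_pos_right k hm))).add hp).congr_left
      fun _ => sub_add_cancel _ _
  have hpow : Tendsto (fun x : ℝ => x ^ k) (𝓝 0) (𝓝 0) := by
    simpa [zero_pow hk.ne'] using (continuous_pow k).tendsto (0 : ℝ)
  have hf₀ := hf.trans_tendsto hpow
  have hp₀ := hp.trans_tendsto hpow
  have hφf : (fun x => φ (f x) - P (f x)) =O[𝓝 0] (· ^ (k * m)) :=
    (hφ.comp_tendsto hf₀).trans (by simpa [Function.comp_def, pow_mul] using hf.pow m)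
  have hPfp : (fun x => P (f x) - P (p x)) =O[𝓝 0] (· ^ (k * m)) :=
    ((hP.hasStrictDerivAt one_ne_zero).hasStrictFDerivAt.isBigO_sub.comp_tendsto
      (hf₀.prodMk_nhds hp₀)).trans hfp
  exact ((hφf.add hPfp).add hPp).congr_left fun _ => by ring

namespace Eta

noncomputable def μ (t : ℝ) : ℝ :=
  c₁ * (t ^ 4 + t ^ 2 + 1) ^ (-(3 : ℝ) / 4) * exp (-(√3 / 2) * arctan ((2 * t ^ 2 + 1) / √3))

noncomputable def κ (t : ℝ) : ℝ := μ t / t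

theorem hasDerivAt_μ (t : ℝ) :
    HasDerivAt μ (-(3 * t * (t ^ 2 + 1)) / (t ^ 4 + t ^ 2 + 1) * μ t) t := by
  have hq : 0 < t ^ 4 + t ^ 2 + 1 := by positivity
  have h3 : √3 ^ 2 = 3 := sq_sqrt (by norm_num)
  have hpow := (((hasDerivAt_pow 4 t).add (hasDerivAt_pow 2 t)).add_const 1).rpow_const
    (p := -(3 : ℝ) / 4) (Or.inl hq.ne')
  have hexp := (((((hasDerivAt_pow 2 t).const_mul 2).add_const 1).div_const √3).arctan.const_mul
    (-(√3 / 2))).exp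
  refine ((hpow.const_mul c₁).mul hexp).congr_deriv ?_
  simp only [Pi.add_apply]
  rw [rpow_sub hq, rpow_one, μ]
  push_cast
  field_simp
  rw [h3]
  ring

theorem η_eq_sin_mul_μ {r : ℝ} (hc : 0 < cos r) (hs : 0 ≤ sin r) :
    η r = sin r * μ (cos r ^ (1 / 3 : ℝ)) := by
  set t := cos r ^ (1 / 3 : ℝ) with ht
  have hcube : ∀ k : ℕ, cos r ^ ((k : ℝ) / 3) = t ^ k := fun k => by
    rw [ht, ← rpow_natCast, ← rpow_mul hc.le]
    ring_nf
  have hc2 : cos r ^ (2 / 3 : ℝ) = t ^ 2 := by simpa using hcube 2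
  have hc3 : cos r = t ^ 3 := by simpa using hcube 3
  have hc4 : cos r ^ (4 / 3 : ℝ) = t ^ 4 := by simpa using hcube 4
  have hq : 0 < t ^ 4 + t ^ 2 + 1 := by positivity
  have ht1 : 0 ≤ 1 - t ^ 2 := by
    rw [← hc2]
    linarith [rpow_le_one hc.le (cos_le_one r) (by norm_num : (0 : ℝ) ≤ 2 / 3)]
  have hsin : sin r = (1 - t ^ 2) ^ (1 / 2 : ℝ) * (t ^ 4 + t ^ 2 + 1) ^ (1 / 2 : ℝ) := by
    have hsq : sin r ^ 2 = (1 - t ^ 2) * (t ^ 4 + t ^ 2 + 1) := by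
      rw [sin_sq, hc3]
      ring
    rw [← mul_rpow ht1 hq.le, ← sqrt_eq_rpow, ← hsq, sqrt_sq hs]
  calc
    η r = c₁ * (1 - t ^ 2) ^ (1 / 2 : ℝ) * (t ^ 4 + t ^ 2 + 1) ^ (-(1 : ℝ) / 4)
        * exp (-(√3 / 2) * arctan ((2 * t ^ 2 + 1) / √3)) := by
      rw [η, hc2, hc4]
      ring_nf
    _ = c₁ * (1 - t ^ 2) ^ (1 / 2 : ℝ)
        * ((t ^ 4 + t ^ 2 + 1) ^ (1 / 2 : ℝ) * (t ^ 4 + t ^ 2 + 1) ^ (-(3 : ℝ) / 4))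
        * exp (-(√3 / 2) * arctan ((2 * t ^ 2 + 1) / √3)) := by
      rw [← rpow_add hq]
      norm_num
    _ = sin r * μ t := by
      rw [hsin, μ]
      ring

theorem hasDerivAt_η {r : ℝ} (hr₀ : 0 < r) (hr : r < π / 2) :
    HasDerivAt η (κ (cos r ^ (1 / 3 : ℝ))) r := by
  have hc : 0 < cos r := cos_pos_of_mem_Ioo ⟨by linarith [pi_pos], hr⟩
  set t := cos r ^ (1 / 3 : ℝ) with ht
  have hc3 : cos r = t ^ 3 := by
    rw [ht, ← rpow_natCast, ← rpow_mul hc.le]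
    norm_num
  have htpos : 0 < t := rpow_pos_of_pos hc _
  have hsin2 : sin r ^ 2 = 1 - t ^ 6 := by
    rw [sin_sq, hc3]
    ring
  have heq : η =ᶠ[𝓝 r] fun x => sin x * μ (cos x ^ (1 / 3 : ℝ)) := by
    filter_upwards [Ioo_mem_nhds (by linarith [pi_pos] : -(π / 2) < r) hr,
      Ioo_mem_nhds hr₀ (by linarith [pi_pos] : r < π)] with x hx hx'
    exact η_eq_sin_mul_μ (cos_pos_of_mem_Ioo hx) (sin_pos_of_mem_Ioo hx').le
  have hcbrt := (hasDerivAt_cos r).rpow_const (p := 1 / 3) (Or.inl hc.ne')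
  refine (((hasDerivAt_sin r).mul ((hasDerivAt_μ t).comp r hcbrt)).congr_of_eventuallyEq
    heq).congr_deriv ?_
  simp only [Function.comp_apply]
  rw [rpow_sub hc, rpow_one, ← ht, κ, hc3]
  field_simp
  linear_combination (t ^ 2 + 1) * μ t * hsin2

theorem hasDerivAt_κ_one_sub {s : ℝ} (hs : s ≠ 1) :
    HasDerivAt (fun s => κ (1 - s))
      ((2 * (1 - s) ^ 2 + 1) ^ 2 / ((1 - s) * ((1 - s) ^ 4 + (1 - s) ^ 2 + 1)) * κ (1 - s)) s := by
  have ht : 1 - s ≠ 0 := sub_ne_zero.mpr hs.symm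
  have hκ := (hasDerivAt_μ (1 - s)).div (hasDerivAt_id (1 - s)) ht
  refine (hκ.comp s ((hasDerivAt_id s).const_sub 1)).congr_deriv ?_
  simp only [κ, id]
  field_simp
  ring

theorem κ_one : κ 1 = 1 := by
  have h3 : √3 ^ 2 = 3 := sq_sqrt (by norm_num)
  have harctan : arctan √3 = π / 3 := by
    rw [← tan_pi_div_three, arctan_tan] <;> linarith [pi_pos]
  have hexp : exp (π / (2 * √3)) * exp (-(√3 / 2) * (π / 3)) = 1 := by
    rw [← exp_add, exp_eq_one_iff]
    field_simp
    rw [h3]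
    ring
  have hrpow : (3 : ℝ) ^ ((3 : ℝ) / 4) * (3 : ℝ) ^ (-(3 : ℝ) / 4) = 1 := by
    rw [← rpow_add (by norm_num)]
    norm_num
  have hsqrt : (2 * 1 ^ 2 + 1) / √3 = √3 := by
    field_simp
    linear_combination -h3
  rw [κ, μ, hsqrt, harctan, c₁]
  norm_num
  calc
    _ = ((3 : ℝ) ^ ((3 : ℝ) / 4) * (3 : ℝ) ^ (-(3 : ℝ) / 4))
        * (exp (π / (2 * √3)) * exp (-(√3 / 2) * (π / 3))) := by ring_nf
    _ = 1 := by rw [hrpow, hexp, one_mul]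

noncomputable def cosPoly (r : ℝ) : ℝ :=
  1 - r ^ 2 / 2 + r ^ 4 / 24 - r ^ 6 / 720 + r ^ 8 / 40320 - r ^ 10 / 3628800

noncomputable def cbrtPoly (x : ℝ) : ℝ :=
  1 - x / 3 - x ^ 2 / 9 - 5 * x ^ 3 / 81 - 10 * x ^ 4 / 243 - 22 * x ^ 5 / 729

noncomputable def cbrtCosPoly (r : ℝ) : ℝ :=
  1 - r ^ 2 / 6 - r ^ 4 / 72 - 23 * r ^ 6 / 6480 - 1069 * r ^ 8 / 1088640
    - 9643 * r ^ 10 / 32659200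

noncomputable def κPoly (s : ℝ) : ℝ :=
  1 + 3 * s + 5 * s ^ 2 + 52 * s ^ 3 / 9 + 59 * s ^ 4 / 12 + 193 * s ^ 5 / 60

theorem isBigO_cos_sub_cosPoly : (fun r => cos r - cosPoly r) =O[𝓝 0] (· ^ 12) := by
  have htaylor := (taylor_isLittleO_univ (f := cos) (x₀ := 0) (n := 12) contDiff_cos).isBigO
  have heq : ∀ r, taylorWithinEval cos 12 univ 0 r = cosPoly r + r ^ 12 * (1 / 479001600) := by
    intro r
    norm_num [taylor_within_apply, Finset.sum_range_succ, iteratedDerivWithin_univ, Nat.factorial,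
      cosPoly]
    ring
  simp only [heq, sub_zero] at htaylor
  exact (htaylor.add (isBigO_pow_mul_const le_rfl (1 / 479001600))).congr_left fun r => by ring

theorem isBigO_cbrt_sub_cbrtPoly :
    (fun x => (1 - x) ^ (1 / 3 : ℝ) - cbrtPoly x) =O[𝓝 0] (· ^ 6) := by
  set g : ℝ → ℝ := fun x => -(3 * (1 - x))⁻¹ with hg
  set p' : ℝ → ℝ := fun x =>
    -1 / 3 - 2 * x / 9 - 5 * x ^ 2 / 27 - 40 * x ^ 3 / 243 - 110 * x ^ 4 / 729 with hp'
  have hne : ∀ᶠ x in 𝓝 (0 : ℝ), x < 1 := eventually_lt_nhds one_pos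
  have hy : ∀ᶠ x in 𝓝 0,
      HasDerivAt (fun x => (1 - x) ^ (1 / 3 : ℝ)) (g x * (1 - x) ^ (1 / 3 : ℝ)) x := by
    filter_upwards [hne] with x hx
    have h1 : 0 < 1 - x := sub_pos.mpr hx
    refine (((hasDerivAt_id' x).const_sub 1).rpow_const (Or.inl h1.ne')).congr_deriv ?_
    rw [rpow_sub h1, rpow_one, hg]
    field_simp
  have hp : ∀ x, HasDerivAt cbrtPoly (p' x) x := fun x =>
    (((((((hasDerivAt_id' x).div_const 3).const_sub 1).sub ((hasDerivAt_pow 2 x).div_const 9)).sub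
      ((hasDerivAt_pow 3 x).const_mul 5 |>.div_const 81)).sub
      ((hasDerivAt_pow 4 x).const_mul 10 |>.div_const 243)).sub
      ((hasDerivAt_pow 5 x).const_mul 22 |>.div_const 729)).congr_deriv (by push_cast; ring)
  have hnum : (fun x => cbrtPoly x + 3 * (1 - x) * p' x) =O[𝓝 0] (· ^ 5) := by
    simp only [cbrtPoly, hp']
    ring_nf
    exact isBigO_pow_mul_const le_rfl _
  have hres : (fun x => g x * cbrtPoly x - p' x) =O[𝓝 0] fun x => (x - 0) ^ 5 := by
    have hinv : ContinuousAt g 0 := by fun_prop (disch := norm_num)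
    refine (hnum.mul (hinv.isBigO_one ℝ)).congr' ?_ (by simp)
    filter_upwards [hne] with x hx
    have : 1 - x ≠ 0 := by linarith
    simp only [hg]
    field_simp
    ring
  simpa using isBigO_sub_pow_succ_of_hasDerivAt_mul_self hy (.of_forall hp)
    (by norm_num [cbrtPoly]) (by norm_num) hres

theorem isBigO_κ_one_sub_sub_κPoly : (fun s => κ (1 - s) - κPoly s) =O[𝓝 0] (· ^ 6) := by
  set g : ℝ → ℝ := fun s =>
    (2 * (1 - s) ^ 2 + 1) ^ 2 / ((1 - s) * ((1 - s) ^ 4 + (1 - s) ^ 2 + 1)) with hg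
  set p' : ℝ → ℝ := fun s => 3 + 10 * s + 52 * s ^ 2 / 3 + 59 * s ^ 3 / 3 + 193 * s ^ 4 / 12
    with hp'
  have hne : ∀ᶠ s in 𝓝 (0 : ℝ), s < 1 := eventually_lt_nhds one_pos
  have hp : ∀ s, HasDerivAt κPoly (p' s) s := fun s =>
    ((((((hasDerivAt_id' s).const_mul 3).const_add 1).add ((hasDerivAt_pow 2 s).const_mul 5)).add
      ((hasDerivAt_pow 3 s).const_mul 52 |>.div_const 9)).add
      ((hasDerivAt_pow 4 s).const_mul 59 |>.div_const 12)).add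
      ((hasDerivAt_pow 5 s).const_mul 193 |>.div_const 60) |>.congr_deriv (by push_cast; ring)
  have hnum : (fun s => (2 * (1 - s) ^ 2 + 1) ^ 2 * κPoly s
      - (1 - s) * ((1 - s) ^ 4 + (1 - s) ^ 2 + 1) * p' s) =O[𝓝 0] (· ^ 5) := by
    simp only [κPoly, hp']
    -- `ring_nf` cancels the low-order terms, leaving a sum of monomials `s ^ j * c` with `j ≥ 5`.
    ring_nf
    repeat' first | apply IsBigO.add | exact isBigO_pow_mul_const (by norm_num) _
  have hres : (fun s => g s * κPoly s - p' s) =O[𝓝 0] fun s => (s - 0) ^ 5 := by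
    have hinv : ContinuousAt (fun s : ℝ => ((1 - s) * ((1 - s) ^ 4 + (1 - s) ^ 2 + 1))⁻¹) 0 := by
      fun_prop (disch := norm_num)
    refine (hnum.mul (hinv.isBigO_one ℝ)).congr' ?_ (by simp)
    filter_upwards [hne] with s hs
    have : 1 - s ≠ 0 := by linarith
    have : (1 - s) ^ 4 + (1 - s) ^ 2 + 1 ≠ 0 := by positivity
    simp only [hg]
    field_simp
  simpa using isBigO_sub_pow_succ_of_hasDerivAt_mul_self
    (hne.mono fun s hs => hasDerivAt_κ_one_sub hs.ne) (.of_forall hp)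
    (by norm_num [κ_one, κPoly]) (by norm_num [κ_one]) hres

theorem isBigO_cbrt_cos_sub_cbrtCosPoly :
    (fun r => cos r ^ (1 / 3 : ℝ) - cbrtCosPoly r) =O[𝓝 0] (· ^ 12) := by
  refine (isBigO_comp_sub_of_isBigO_sub (k := 2) (m := 6) (f := fun r => 1 - cos r)
    (p := fun r => 1 - cosPoly r) (by norm_num) (by norm_num) isBigO_cbrt_sub_cbrtPoly
    (by unfold cbrtPoly; fun_prop) ?_ ?_ ?_).congr_left fun r => by rw [sub_sub_cancel]
  · simp only [cosPoly]
    ring_nf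
    repeat' first | apply IsBigO.add | exact isBigO_pow_mul_const (by norm_num) _
  · exact isBigO_cos_sub_cosPoly.neg_left.congr_left fun r => by ring
  · simp only [cbrtPoly, cosPoly, cbrtCosPoly]
    ring_nf
    repeat' first | apply IsBigO.add | exact isBigO_pow_mul_const (by norm_num) _

theorem isBigO_κ_cbrt_cos_sub :
    (fun r => κ (cos r ^ (1 / 3 : ℝ)) - (1 + r ^ 2 / 2 + 13 * r ^ 4 / 72 + 1177 * r ^ 6 / 19440
      + 7369 * r ^ 8 / 362880 + 681907 * r ^ 10 / 97977600)) =O[𝓝 0] (· ^ 12) := by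
  refine (isBigO_comp_sub_of_isBigO_sub (k := 2) (m := 6) (f := fun r => 1 - cos r ^ (1 / 3 : ℝ))
    (p := fun r => 1 - cbrtCosPoly r) (by norm_num) (by norm_num) isBigO_κ_one_sub_sub_κPoly
    (by unfold κPoly; fun_prop) ?_ ?_ ?_).congr_left fun r => by rw [sub_sub_cancel]
  · simp only [cbrtCosPoly]
    ring_nf
    repeat' first | apply IsBigO.add | exact isBigO_pow_mul_const (by norm_num) _
  · exact isBigO_cbrt_cos_sub_cbrtCosPoly.neg_left.congr_left fun r => by ring
  · simp only [κPoly, cbrtCosPoly]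
    ring_nf
    repeat' first | apply IsBigO.add | exact isBigO_pow_mul_const (by norm_num) _

end Eta

/-- The Taylor expansion of `ψ = η'` at the origin from the proof of Lemma 2.4:
`η'(r) = 1 + r²/2 + 13r⁴/72 + 1177r⁶/19440 + 7369r⁸/362880 + 681907r¹⁰/97977600 + O(r¹²)`
as `r → 0⁺`. -/
theorem stmt_12 :
    (fun r : ℝ => deriv η r -
        (1 + r ^ 2 / 2 + 13 * r ^ 4 / 72 + 1177 * r ^ 6 / 19440
          + 7369 * r ^ 8 / 362880 + 681907 * r ^ 10 / 97977600))
      =O[nhdsWithin 0 (Set.Ioi 0)] (fun r : ℝ => r ^ 12) := by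
  refine (Eta.isBigO_κ_cbrt_cos_sub.mono nhdsWithin_le_nhds).congr' ?_ .rfl
  filter_upwards [Ioo_mem_nhdsGT (by linarith [pi_pos] : (0 : ℝ) < π / 2)] with r hr
  rw [(Eta.hasDerivAt_η hr.1 hr.2).deriv]
end
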